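/- arXiv:1308.5018 — 5 statements merged into one kernel-verified Lean document; each statement's English description precedes it below -/
import Mathlib

section
/- The polynomials T^k_s satisfy the recurrence T^k_s = T^{k,h}_{s-1} + Σ_{j=1}^{k-1} y^j_0 · T^{k-j, h+jn}_{s-1} + y^k_0 for all k ≥ 1 and s ≥ 2, where T^{k,α}_s denotes the polynomial T^k_s with every variable y^r_j replaced by y^r_{j+α}. -/
/-!
Spreading a composition `(k_1, …, k_p)` of `k ≥ 1` along positions `λ_1 < ⋯ < λ_p` in
`{0, …, s-1}` is a bijection onto the weak compositions `f` of `k` into `s` parts, under which the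
monomial of `T^k_s` becomes `∏_{f_i ≠ 0} y^{f_i}_{ih + (f_0 + ⋯ + f_{i-1})n}`. In this form the
recurrence is the split according to the first part `c = f_0`: for `c = 0` every position moves
down by one (the shift by `h`), and for `c > 0` the factor `y^c_0` splits off while every later
prefix sum grows by `c` (the shift by `h + cn`).
-/

open Finset

/-- The finset of compositions of `k` into `p` positive parts, encoded as
functions `Fin p → Fin (k+1)`. -/
def comps (k p : ℕ) : Finset (Fin p → Fin (k + 1)) :=
  Finset.univ.filter fun K => (∀ i, 1 ≤ (K i : ℕ)) ∧ (∑ i, (K i : ℕ)) = k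

/-- Partial sum `k_1 + ⋯ + k_{i-1}` of the parts of a composition before index `i`. -/
def prefSum {k p : ℕ} (K : Fin p → Fin (k + 1)) (i : Fin p) : ℤ :=
  ∑ j ∈ Finset.Iio i, ((K j : ℕ) : ℤ)

/-- Partial sum `k_{i+1} + ⋯ + k_p` of the parts of a composition after index `i`. -/
def sufSum {k p : ℕ} (K : Fin p → Fin (k + 1)) (i : Fin p) : ℤ :=
  ∑ j ∈ Finset.Ioi i, ((K j : ℕ) : ℤ)

/-- The multivariate polynomial
`T^k_s = Σ_K Σ_{0 ≤ λ_1 < ⋯ < λ_p ≤ s-1} y^{k_1}_{λ_1 h} ⋯ y^{k_p}_{λ_p h + (k_1+⋯+k_{p-1})n}`,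
summed over compositions `K = (k_1,…,k_p)` of `k`. -/
def Tpoly {R : Type*} [CommRing R] (y : ℕ → ℤ → R) (n h : ℤ) (k s : ℕ) : R :=
  ∑ p ∈ Finset.Icc 1 k, ∑ K ∈ comps k p,
    ∑ lam ∈ Finset.univ.filter (fun lam : Fin p → Fin s => ∀ i j, i < j → lam i < lam j),
      ∏ i, y ((K i : ℕ)) (((lam i : ℕ) : ℤ) * h + prefSum K i * n)

/-- The multivariate polynomial
`S^k_s = (-1)^k Σ_K (-1)^p Σ_{0 ≤ λ_1 ≤ ⋯ ≤ λ_p ≤ s-1}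
  y^{k_1}_{λ_1 h + (k_2+⋯+k_p)n} ⋯ y^{k_p}_{λ_p h}`,
summed over compositions `K = (k_1,…,k_p)` of `k`. -/
def Spoly {R : Type*} [CommRing R] (y : ℕ → ℤ → R) (n h : ℤ) (k s : ℕ) : R :=
  (-1) ^ k * ∑ p ∈ Finset.Icc 1 k, (-1) ^ p *
    ∑ K ∈ comps k p,
      ∑ lam ∈ Finset.univ.filter (fun lam : Fin p → Fin s => ∀ i j, i ≤ j → lam i ≤ lam j),
        ∏ i, y ((K i : ℕ)) (((lam i : ℕ) : ℤ) * h + sufSum K i * n)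

/-- The shift of variables `y^r_j ↦ y^r_{j+α}`. -/
def shiftVar {R : Type*} (y : ℕ → ℤ → R) (α : ℤ) : ℕ → ℤ → R := fun r j => y r (j + α)

def spread {p s : ℕ} (K : Fin p → ℕ) (lam : Fin p → Fin s) : Fin s → ℕ :=
  fun i => ∑ j with lam j = i, K j

section spread

variable {p s : ℕ} (K : Fin p → ℕ) {lam : Fin p → Fin s}

lemma spread_apply_of_injective (hlam : Function.Injective lam) (j : Fin p) :
    spread K lam (lam j) = K j := by
  rw [spread, filter_congr (fun _ _ => hlam.eq_iff), filter_eq', if_pos (mem_univ j),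
    sum_singleton]

lemma spread_eq_zero {i : Fin s} (hi : ∀ j, lam j ≠ i) : spread K lam i = 0 :=
  sum_eq_zero fun j hj => absurd (mem_filter.mp hj).2 (hi j)

variable (lam) in
lemma sum_spread : ∑ i, spread K lam i = ∑ j, K j :=
  sum_fiberwise univ lam K

lemma sum_Iio_spread (hlam : StrictMono lam) (j : Fin p) :
    ∑ i ∈ Iio (lam j), spread K lam i = ∑ j' ∈ Iio j, K j' := by
  calc ∑ i ∈ Iio (lam j), spread K lam i = ∑ j' with lam j' ∈ Iio (lam j), K j' :=
        sum_fiberwise_eq_sum_filter _ _ _ _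
    _ = ∑ j' ∈ Iio j, K j' := by
      congr 1
      ext
      simp [hlam.lt_iff_lt]

lemma support_spread (hK : ∀ j, K j ≠ 0) (hlam : Function.Injective lam) :
    ({i | spread K lam i ≠ 0} : Finset (Fin s)) = univ.image lam := by
  ext i
  simp only [mem_filter, mem_univ, true_and, mem_image]
  constructor
  · intro hi
    by_contra! hne
    exact hi (spread_eq_zero K hne)
  · rintro ⟨j, rfl⟩
    rw [spread_apply_of_injective K hlam]
    exact hK j

variable {K} in
lemma eq_of_spread_eq {K' : Fin p → ℕ} {lam' : Fin p → Fin s} (hK : ∀ j, K j ≠ 0)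
    (hK' : ∀ j, K' j ≠ 0) (hlam : StrictMono lam) (hlam' : StrictMono lam')
    (heq : spread K lam = spread K' lam') : K = K' ∧ lam = lam' := by
  have hsupp := congrArg (fun f : Fin s → ℕ => ({i | f i ≠ 0} : Finset (Fin s))) heq
  simp only [support_spread K hK hlam.injective, support_spread K' hK' hlam'.injective] at hsupp
  obtain rfl : lam = lam' := (hlam.range_inj hlam').mp <| by
    rw [← Set.image_univ, ← Set.image_univ, ← coe_univ, ← coe_image, ← coe_image, hsupp]
  refine ⟨funext fun j => ?_, rfl⟩
  rw [← spread_apply_of_injective K hlam.injective, heq,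
    spread_apply_of_injective K' hlam.injective]

end spread

lemma sum_antidiagonalTuple_succ {M : Type*} [AddCommMonoid M] (s k : ℕ)
    (F : (Fin (s + 1) → ℕ) → M) :
    ∑ f ∈ Nat.antidiagonalTuple (s + 1) k, F f =
      ∑ c ∈ range (k + 1), ∑ g ∈ Nat.antidiagonalTuple s (k - c), F (Fin.cons c g) := by
  rw [← sum_fiberwise_of_maps_to (g := fun f => f 0) (t := range (k + 1))]
  · refine sum_congr rfl fun c hc => ?_
    rw [mem_range] at hc
    refine sum_nbij' Fin.tail (Fin.cons (α := fun _ => ℕ) c) ?_ ?_ ?_ ?_ ?_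
    · intro f hf
      rw [mem_filter, Nat.mem_antidiagonalTuple, Fin.sum_univ_succ] at hf
      rw [Nat.mem_antidiagonalTuple]
      exact Nat.eq_sub_of_add_eq' (hf.2 ▸ hf.1)
    · intro g hg
      rw [Nat.mem_antidiagonalTuple] at hg
      rw [mem_filter, Nat.mem_antidiagonalTuple, Fin.sum_univ_succ]
      simp only [Fin.cons_zero, Fin.cons_succ, hg, and_true]
      omega
    · intro f hf
      rw [mem_filter] at hf
      rw [← hf.2, Fin.cons_self_tail]
    · intro g _
      exact Fin.tail_cons _ _
    · intro f hf
      rw [mem_filter] at hf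
      rw [← hf.2, Fin.cons_self_tail]
  · intro f hf
    rw [Nat.mem_antidiagonalTuple] at hf
    rw [mem_range, Nat.lt_succ_iff, ← hf]
    exact single_le_sum (fun i _ => Nat.zero_le _) (mem_univ 0)

lemma Fin.sum_Iio_succ {M : Type*} [AddCommMonoid M] {s : ℕ} (f : Fin (s + 1) → M) (i : Fin s) :
    ∑ j ∈ Iio i.succ, f j = f 0 + ∑ j ∈ Iio i, f j.succ := by
  rw [← Ico_bot, bot_eq_zero, ← Ioo_insert_left (Fin.succ_pos i), sum_insert (by simp),
    ← Fin.map_succEmb_Iio, sum_map]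
  rfl

lemma mem_comps {k p : ℕ} {K : Fin p → Fin (k + 1)} :
    K ∈ comps k p ↔ (∀ i, 1 ≤ (K i : ℕ)) ∧ ∑ i, (K i : ℕ) = k := by
  simp [comps]

lemma le_of_mem_antidiagonalTuple {s k : ℕ} {f : Fin s → ℕ} (hf : f ∈ Nat.antidiagonalTuple s k)
    (i : Fin s) : f i ≤ k :=
  Nat.mem_antidiagonalTuple.mp hf ▸ single_le_sum (fun _ _ => Nat.zero_le _) (mem_univ i)

lemma spread_orderEmbOfFin_support {s p : ℕ} (f : Fin s → ℕ) (hcard : #{i | f i ≠ 0} = p) :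
    spread (fun j => f (Finset.orderEmbOfFin {i | f i ≠ 0} hcard j))
      (Finset.orderEmbOfFin {i | f i ≠ 0} hcard) = f := by
  set lam := Finset.orderEmbOfFin {i | f i ≠ 0} hcard
  funext i
  by_cases hi : f i = 0
  · rw [hi]
    refine spread_eq_zero _ fun j hj => ?_
    have := orderEmbOfFin_mem _ hcard j
    simp_all [lam]
  · obtain ⟨j, rfl⟩ : i ∈ Set.range lam := by
      rw [range_orderEmbOfFin]
      simpa using hi
    exact spread_apply_of_injective _ lam.injective j

lemma sum_comps_strictMono_spread {M : Type*} [AddCommMonoid M] {s : ℕ} (F : (Fin s → ℕ) → M)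
    (k p : ℕ) :
    ∑ K ∈ comps k p,
      ∑ lam ∈ Finset.univ.filter (fun lam : Fin p → Fin s => ∀ i j, i < j → lam i < lam j),
        F (spread (fun j => (K j : ℕ)) lam) =
      ∑ f ∈ Nat.antidiagonalTuple s k with #{i | f i ≠ 0} = p, F f := by
  rw [← sum_product']
  refine sum_bij (fun x _ => spread (fun j => (x.1 j : ℕ)) x.2) ?_ ?_ ?_ fun _ _ => rfl
  · rintro ⟨K, lam⟩ hx
    simp only [mem_product, mem_comps, mem_filter, mem_univ, true_and] at hx
    obtain ⟨⟨hK, hsum⟩, hlam⟩ := hx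
    have hK' : ∀ j, (K j : ℕ) ≠ 0 := fun j => Nat.one_le_iff_ne_zero.mp (hK j)
    have hlam' : StrictMono lam := fun i j hij => hlam i j hij
    rw [mem_filter, Nat.mem_antidiagonalTuple, sum_spread, hsum,
      support_spread _ hK' hlam'.injective, card_image_of_injective _ hlam'.injective]
    simp
  · rintro ⟨K, lam⟩ hx ⟨K', lam'⟩ hx' heq
    simp only [mem_product, mem_comps, mem_filter, mem_univ, true_and] at hx hx'
    obtain ⟨hK, rfl⟩ := eq_of_spread_eq (fun j => Nat.one_le_iff_ne_zero.mp (hx.1.1 j))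
      (fun j => Nat.one_le_iff_ne_zero.mp (hx'.1.1 j)) (fun i j hij => hx.2 i j hij)
      (fun i j hij => hx'.2 i j hij) heq
    exact Prod.ext (funext fun j => Fin.ext (congrFun hK j)) rfl
  · intro f hf
    obtain ⟨hf, hcard⟩ := mem_filter.mp hf
    set lam := Finset.orderEmbOfFin {i | f i ≠ 0} hcard
    have hspread := spread_orderEmbOfFin_support f hcard
    refine ⟨(fun j => ⟨f (lam j), Nat.lt_succ_of_le (le_of_mem_antidiagonalTuple hf _)⟩, lam),
      ?_, hspread⟩
    simp only [mem_product, mem_comps, mem_filter, mem_univ, true_and]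
    refine ⟨⟨fun j => ?_, ?_⟩, fun i j hij => lam.strictMono hij⟩
    · have := orderEmbOfFin_mem _ hcard j
      simp only [mem_filter, mem_univ, true_and] at this
      exact Nat.one_le_iff_ne_zero.mpr this
    · rw [← sum_spread, hspread, ← Nat.mem_antidiagonalTuple]
      exact hf

lemma card_support_mem_Icc {s k : ℕ} (hk : 1 ≤ k) {f : Fin s → ℕ}
    (hf : f ∈ Nat.antidiagonalTuple s k) : #{i | f i ≠ 0} ∈ Icc 1 k := by
  rw [Nat.mem_antidiagonalTuple] at hf
  rw [mem_Icc, Nat.one_le_iff_ne_zero, Ne, card_eq_zero, filter_eq_empty_iff]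
  constructor
  · intro hzero
    rw [sum_eq_zero fun i _ => not_not.mp (hzero (mem_univ i))] at hf
    omega
  · calc #{i | f i ≠ 0} = ∑ i with f i ≠ 0, 1 := card_eq_sum_ones _
      _ ≤ ∑ i with f i ≠ 0, f i :=
        sum_le_sum fun i hi => Nat.one_le_iff_ne_zero.mpr (mem_filter.mp hi).2
      _ = k := (sum_filter_ne_zero _).trans hf

section weakTpoly

variable {R : Type*} [CommRing R] (y : ℕ → ℤ → R) (n h : ℤ)

def weakMonomial {s : ℕ} (f : Fin s → ℕ) : R :=
  ∏ i, if f i = 0 then 1 else y (f i) (((i : ℕ) : ℤ) * h + ((∑ j ∈ Iio i, f j : ℕ) : ℤ) * n)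

def weakTpoly (k s : ℕ) : R :=
  ∑ f ∈ Nat.antidiagonalTuple s k, weakMonomial y n h f

lemma weakMonomial_cons {s : ℕ} (c : ℕ) (g : Fin s → ℕ) :
    weakMonomial y n h (Fin.cons c g : Fin (s + 1) → ℕ) =
      (if c = 0 then 1 else y c 0) * weakMonomial (shiftVar y (h + (c : ℤ) * n)) n h g := by
  rw [weakMonomial, Fin.prod_univ_succ]
  congr 1
  · have : Iio (0 : Fin (s + 1)) = ∅ := Iio_eq_empty.mpr fun b _ => Fin.zero_le b
    simp [this]
  · refine prod_congr rfl fun i _ => ?_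
    simp only [Fin.cons_succ, Fin.sum_Iio_succ, Fin.cons_zero, shiftVar]
    split_ifs
    · rfl
    · congr 1
      push_cast [Fin.val_succ]
      ring

lemma weakTpoly_zero_left (s : ℕ) : weakTpoly y n h 0 s = 1 := by
  simp [weakTpoly, weakMonomial, Nat.antidiagonalTuple_zero_right]

lemma weakTpoly_succ_right (k s : ℕ) :
    weakTpoly y n h k (s + 1) = ∑ c ∈ range (k + 1),
      (if c = 0 then 1 else y c 0) * weakTpoly (shiftVar y (h + (c : ℤ) * n)) n h (k - c) s := by
  simp only [weakTpoly, sum_antidiagonalTuple_succ, weakMonomial_cons, mul_sum]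

lemma weakMonomial_spread {p s : ℕ}
    {K : Fin p → ℕ} {lam : Fin p → Fin s} (hK : ∀ j, K j ≠ 0) (hlam : StrictMono lam) :
    weakMonomial y n h (spread K lam) =
      ∏ j, y (K j) (((lam j : ℕ) : ℤ) * h + ((∑ j' ∈ Iio j, K j' : ℕ) : ℤ) * n) := by
  rw [weakMonomial, prod_ite, prod_const_one, one_mul]
  simp only [← ne_eq]
  rw [support_spread K hK hlam.injective, prod_image fun _ _ _ _ hij => hlam.injective hij]
  simp only [spread_apply_of_injective K hlam.injective, sum_Iio_spread K hlam]

lemma Tpoly_eq_weakTpoly {k : ℕ} (hk : 1 ≤ k) (s : ℕ) : Tpoly y n h k s = weakTpoly y n h k s := by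
  rw [weakTpoly, ← sum_fiberwise_of_maps_to fun f hf => card_support_mem_Icc hk hf, Tpoly]
  refine sum_congr rfl fun p _ => ?_
  rw [← sum_comps_strictMono_spread]
  refine sum_congr rfl fun K hK => sum_congr rfl fun lam hlam => ?_
  rw [weakMonomial_spread y n h (fun j => Nat.one_le_iff_ne_zero.mp ((mem_comps.mp hK).1 j))
    fun i j hij => (mem_filter.mp hlam).2 i j hij]
  simp only [prefSum, Nat.cast_sum]

end weakTpoly

theorem Tpoly_rec_shift_general {R : Type*} [CommRing R] (y : ℕ → ℤ → R) (n h : ℤ)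
    (k s : ℕ) (hk : 1 ≤ k) (hs : 2 ≤ s) :
    Tpoly y n h k s =
      Tpoly (shiftVar y h) n h k (s - 1) +
        (∑ j ∈ Finset.Ico 1 k, y j 0 * Tpoly (shiftVar y (h + (j : ℤ) * n)) n h (k - j) (s - 1)) +
        y k 0 := by
  obtain ⟨t, rfl⟩ : ∃ t, s = t + 1 := ⟨s - 1, by omega⟩
  rw [Nat.add_sub_cancel, Tpoly_eq_weakTpoly y n h hk, weakTpoly_succ_right, sum_range_succ,
    sum_range_eq_add_Ico _ (by omega), Nat.sub_self, weakTpoly_zero_left,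
    if_neg (show k ≠ 0 by omega)]
  simp only [if_true, Nat.cast_zero, zero_mul, add_zero, one_mul, mul_one,
    Tpoly_eq_weakTpoly _ n h hk]
  congr 2
  refine sum_congr rfl fun j hj => ?_
  rw [mem_Ico] at hj
  rw [if_neg (by omega), Tpoly_eq_weakTpoly _ n h (by omega : 1 ≤ k - j)]

/-- `T^k_s = T^{k,h}_{s-1} + Σ_{j=1}^{k-1} y^j_0 T^{k-j, h+jn}_{s-1} + y^k_0`. -/
theorem Tpoly_rec_shift {R : Type*} [CommRing R] (y : ℕ → ℤ → R) (n h : ℤ)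
    (hn : 1 ≤ n) (hh : 1 ≤ h) (k s : ℕ) (hk : 1 ≤ k) (hs : 2 ≤ s) :
    Tpoly y n h k s =
      Tpoly (shiftVar y h) n h k (s - 1) +
        (∑ j ∈ Finset.Ico 1 k, y j 0 * Tpoly (shiftVar y (h + (j : ℤ) * n)) n h (k - j) (s - 1)) +
        y k 0 :=
  Tpoly_rec_shift_general y n h k s hk hs
end

section
/- For every k ≥ 1 and s ≥ 1 the identity S^k_s + Σ_{j=1}^{k-1} (-1)^j T^j_s · S^{k-j, jn}_s + (-1)^k T^k_s = 0 holds, i.e. the lower-triangular matrices built from the shifted polynomials T^j_s and (-1)^j S^j_s are mutually inverse. -/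
open Finset

/-!
Functions `ℕ → ℤ → R`, read as `(degree k, shift α) ↦ coefficient`, form a ring under the
skew convolution `(f ⋆ g) k α = ∑_{i+j=k} f i α * g j (α + i n)`: these are the
lower-triangular matrices of the statement. Let `b_s = 1 + ∑_{k ≥ 1} y^k_{sh+α}`. In the sums
over `λ_i ≤ s`, splitting off the terms with `λ_p = s` gives `T_{s+1} = T_s ⋆ b_s` (strictly
increasing `λ`) and `S_s = b_s ⋆ S_{s+1}` (weakly increasing `λ`, so `λ_{p-1} = s` is still
allowed, and `p` drops by one, flipping the sign `(-1)^p`). Hence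
`T_s ⋆ S_s = T_{s+1} ⋆ S_{s+1}`, and by induction `T_s ⋆ S_s = T_0 ⋆ S_0 = 1`. The theorem is
the coefficient `(k, 0)` of this identity, after the multiplicative twist by `(-1)^k`.
-/

section ShiftConvolution

variable {R : Type*} [CommRing R] (n : ℤ)

def shiftConv (f g : ℕ → ℤ → R) : ℕ → ℤ → R :=
  fun k α => ∑ ij ∈ antidiagonal k, f ij.1 α * g ij.2 (α + ij.1 * n)

def convOne : ℕ → ℤ → R := fun k _ => if k = 0 then 1 else 0

def signTwist (f : ℕ → ℤ → R) : ℕ → ℤ → R := fun k α => (-1) ^ k * f k α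

variable {n}

lemma convOne_shiftConv (g : ℕ → ℤ → R) : shiftConv n convOne g = g := by
  funext k α
  rw [shiftConv, Nat.sum_antidiagonal_eq_sum_range_succ_mk, sum_range_succ', sum_eq_zero]
  · simp [convOne]
  · intro j _
    simp [convOne]

lemma shiftConv_assoc (f g e : ℕ → ℤ → R) :
    shiftConv n (shiftConv n f g) e = shiftConv n f (shiftConv n g e) := by
  funext k α
  simp only [shiftConv, sum_mul, mul_sum, sum_sigma']
  apply sum_nbij' (fun ⟨⟨_, j⟩, ⟨a, b⟩⟩ ↦ ⟨(a, b + j), (b, j)⟩)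
    (fun ⟨⟨a, _⟩, ⟨b, c⟩⟩ ↦ ⟨(a + b, c), (a, b)⟩)
  all_goals aesop (add simp [add_assoc, mul_assoc, add_mul])

lemma signTwist_shiftConv (f g : ℕ → ℤ → R) :
    signTwist (shiftConv n f g) = shiftConv n (signTwist f) (signTwist g) := by
  funext k α
  simp only [signTwist, shiftConv, mul_sum]
  refine sum_congr rfl fun ij hij => ?_
  rw [← mem_antidiagonal.1 hij, pow_add]
  ring

lemma signTwist_convOne : signTwist (convOne : ℕ → ℤ → R) = convOne := by
  funext k α
  by_cases hk : k = 0 <;> simp [signTwist, convOne, hk]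

end ShiftConvolution

section Sequences

variable {M : Type*} [AddCommMonoid M]

lemma Fin.strictMono_snoc_iff {α : Type*} [Preorder α] {q : ℕ} {l : Fin q → α} {x : α} :
    StrictMono (Fin.snoc l x : Fin (q + 1) → α) ↔ StrictMono l ∧ ∀ i, l i < x := by
  refine ⟨fun hl => ⟨fun i j hij => ?_, fun i => ?_⟩, fun ⟨hl, hx⟩ i j hij => ?_⟩
  · simpa using hl (Fin.castSucc_lt_castSucc_iff.2 hij)
  · simpa using hl (Fin.castSucc_lt_last i)
  · induction j using Fin.lastCases with
    | last => induction i using Fin.lastCases with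
      | last => exact absurd hij (lt_irrefl _)
      | cast i => simpa using hx i
    | cast j => induction i using Fin.lastCases with
      | last => exact absurd hij (Fin.castSucc_lt_last j).not_gt
      | cast i => simpa using hl (Fin.castSucc_lt_castSucc_iff.1 hij)

lemma Fin.monotone_snoc_iff {α : Type*} [Preorder α] {q : ℕ} {l : Fin q → α} {x : α} :
    Monotone (Fin.snoc l x : Fin (q + 1) → α) ↔ Monotone l ∧ ∀ i, l i ≤ x := by
  refine ⟨fun hl => ⟨fun i j hij => ?_, fun i => ?_⟩, fun ⟨hl, hx⟩ i j hij => ?_⟩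
  · simpa using hl (Fin.castSucc_le_castSucc_iff.2 hij)
  · simpa using hl (Fin.castSucc_lt_last i).le
  · induction j using Fin.lastCases with
    | last => induction i using Fin.lastCases with
      | last => exact le_rfl
      | cast i => simpa using hx i
    | cast j => induction i using Fin.lastCases with
      | last => exact absurd hij (Fin.castSucc_lt_last j).not_ge
      | cast i => simpa using hl (Fin.castSucc_le_castSucc_iff.1 hij)

lemma forall_lt_iff_last_lt {q s : ℕ} {l : Fin (q + 1) → ℕ} (hl : Monotone l) :
    (∀ i, l i < s) ↔ l (Fin.last q) < s :=
  ⟨fun h => h _, fun h i => (hl (Fin.le_last i)).trans_lt h⟩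

lemma filter_last_ne_eq_filter_piFinset_range {q s : ℕ} {P : (Fin (q + 1) → ℕ) → Prop}
    [DecidablePred P] (hP : ∀ l, P l → Monotone l) :
    ((Fintype.piFinset fun _ => range (s + 1)).filter P).filter (· (Fin.last q) ≠ s) =
      (Fintype.piFinset fun _ => range s).filter P := by
  ext l
  simp only [mem_filter, Fintype.mem_piFinset, mem_range]
  constructor
  · rintro ⟨⟨hlt, hl⟩, hne⟩
    exact ⟨(forall_lt_iff_last_lt (hP l hl)).2 (by have := hlt (Fin.last q); omega), hl⟩
  · rintro ⟨hlt, hl⟩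
    exact ⟨⟨fun i => (hlt i).trans (Nat.lt_succ_self s), hl⟩, (hlt _).ne⟩

lemma sum_filter_last_eq_sum_snoc {α : Type*} [DecidableEq α] {q : ℕ}
    {A : Finset (Fin (q + 1) → α)} {B : Finset (Fin q → α)} {x : α}
    (hAB : ∀ l, Fin.snoc l x ∈ A ↔ l ∈ B) (F : (Fin (q + 1) → α) → M) :
    ∑ l ∈ A with l (Fin.last q) = x, F l = ∑ l ∈ B, F (Fin.snoc l x) := by
  have hinit : ∀ l ∈ A.filter (· (Fin.last q) = x), Fin.snoc (Fin.init l) x = l := by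
    intro l hl
    rw [← (mem_filter.1 hl).2, Fin.snoc_init_self]
  refine (sum_nbij' (fun l => (Fin.snoc l x : Fin (q + 1) → α)) Fin.init (fun l hl => ?_)
    (fun l hl => ?_) (fun l _ => Fin.init_snoc _ _) hinit (fun _ _ => rfl)).symm
  · exact mem_filter.2 ⟨(hAB l).2 hl, Fin.snoc_last _ _⟩
  · rw [← hAB, hinit l hl]
    exact (mem_filter.1 hl).1

lemma sum_filter_univ_val_eq {p m : ℕ}
    {Q : (Fin p → Fin m) → Prop} [DecidablePred Q] {P : (Fin p → ℕ) → Prop} [DecidablePred P]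
    (hQP : ∀ f, Q f ↔ P fun i => f i) (G : (Fin p → ℕ) → M) :
    ∑ f ∈ univ.filter Q, G (fun i => f i) =
      ∑ g ∈ (Fintype.piFinset fun _ => range m).filter P, G g := by
  refine sum_bij' (fun f _ i => f i) (fun g hg i => ⟨g i, ?_⟩) (fun f hf => ?_) (fun g hg => ?_)
    (fun _ _ => rfl) (fun _ _ => rfl) (fun _ _ => rfl)
  · exact mem_range.1 (Fintype.mem_piFinset.1 (mem_filter.1 hg).1 i)
  · simp only [mem_filter, mem_univ, true_and, Fintype.mem_piFinset, mem_range] at hf ⊢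
    exact ⟨fun i => (f i).isLt, (hQP f).1 hf⟩
  · exact mem_filter.2 ⟨mem_univ _, (hQP _).2 (mem_filter.1 hg).2⟩

-- Tuples are `ℕ`-valued and bounded through `range`, so that raising a bound keeps them unchanged.
def compositions (k p : ℕ) : Finset (Fin p → ℕ) :=
  (Fintype.piFinset fun _ => range (k + 1)).filter fun c => (∀ i, 1 ≤ c i) ∧ ∑ i, c i = k

def strictSeqs (p s : ℕ) : Finset (Fin p → ℕ) :=
  (Fintype.piFinset fun _ => range s).filter StrictMono

def monoSeqs (p s : ℕ) : Finset (Fin p → ℕ) :=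
  (Fintype.piFinset fun _ => range s).filter Monotone

lemma mem_compositions {k p : ℕ} {c : Fin p → ℕ} :
    c ∈ compositions k p ↔ (∀ i, 1 ≤ c i) ∧ ∑ i, c i = k := by
  simp only [compositions, mem_filter, Fintype.mem_piFinset, mem_range, and_iff_right_iff_imp]
  rintro ⟨-, rfl⟩ i
  exact Nat.lt_succ_of_le (single_le_sum (fun j _ => Nat.zero_le (c j)) (mem_univ i))

lemma mem_strictSeqs {p s : ℕ} {l : Fin p → ℕ} :
    l ∈ strictSeqs p s ↔ (∀ i, l i < s) ∧ StrictMono l := by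
  simp [strictSeqs]

lemma mem_monoSeqs {p s : ℕ} {l : Fin p → ℕ} :
    l ∈ monoSeqs p s ↔ (∀ i, l i < s) ∧ Monotone l := by
  simp [monoSeqs]

lemma compositions_eq_empty_of_lt {k p : ℕ} (hkp : k < p) : compositions k p = ∅ := by
  refine eq_empty_of_forall_notMem fun c hc => ?_
  obtain ⟨hpos, hsum⟩ := mem_compositions.1 hc
  have : p ≤ k := by simpa [hsum] using card_nsmul_le_sum univ c 1 fun i _ => hpos i
  omega

lemma compositions_zero_right (k : ℕ) : compositions k 0 = if k = 0 then {![]} else ∅ := by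
  split_ifs with hk <;> ext c <;> simp [mem_compositions, hk, Subsingleton.elim c ![], Ne.symm]

lemma strictSeqs_zero_left (s : ℕ) : strictSeqs 0 s = {![]} := by
  ext l
  simp [mem_strictSeqs, Subsingleton.elim l ![], Subsingleton.strictMono]

lemma monoSeqs_zero_left (s : ℕ) : monoSeqs 0 s = {![]} := by
  ext l
  simp [mem_monoSeqs, Subsingleton.elim l ![], Subsingleton.monotone]

lemma strictSeqs_zero_right (q : ℕ) : strictSeqs (q + 1) 0 = ∅ := by
  simp [strictSeqs]

lemma monoSeqs_zero_right (q : ℕ) : monoSeqs (q + 1) 0 = ∅ := by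
  simp [monoSeqs]

lemma sum_range_sum_compositions {k N : ℕ} (hkN : k < N)
    (G : (p : ℕ) → (Fin p → ℕ) → M) :
    ∑ p ∈ range N, ∑ c ∈ compositions k p, G p c =
      ∑ p ∈ range (k + 1), ∑ c ∈ compositions k p, G p c := by
  refine (sum_subset (range_subset_range.2 hkN) fun p _ hp => ?_).symm
  rw [compositions_eq_empty_of_lt (by simpa using hp), sum_empty]

lemma sum_compositions_succ {k q : ℕ} (G : (Fin (q + 1) → ℕ) → M) :
    ∑ c ∈ compositions k (q + 1), G c =
      ∑ j ∈ range k, ∑ c ∈ compositions j q, G (Fin.snoc c (k - j)) := by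
  have hlast : ∀ c ∈ compositions k (q + 1), 1 ≤ c (Fin.last q) ∧ c (Fin.last q) ≤ k := by
    intro c hc
    obtain ⟨hpos, rfl⟩ := mem_compositions.1 hc
    exact ⟨hpos _, single_le_sum (fun j _ => Nat.zero_le (c j)) (mem_univ _)⟩
  rw [← sum_fiberwise_of_maps_to (g := fun c => k - c (Fin.last q)) (t := range k)
    fun c hc => mem_range.2 (by have := hlast c hc; omega)]
  refine sum_congr rfl fun j hj => ?_
  have hjk := mem_range.1 hj
  rw [← sum_filter_last_eq_sum_snoc (A := compositions k (q + 1)) (x := k - j) fun c => ?_]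
  · refine sum_congr (filter_congr fun c hc => ?_) fun _ _ => rfl
    have := hlast c hc
    omega
  · have hpos : 1 ≤ k - j := by omega
    simp only [mem_compositions, Fin.forall_fin_succ', Fin.snoc_castSucc, Fin.snoc_last,
      Fin.sum_univ_castSucc, hpos, and_true]
    exact and_congr_right fun _ => by omega

lemma sum_strictSeqs_succ {q s : ℕ} (F : (Fin (q + 1) → ℕ) → M) :
    ∑ l ∈ strictSeqs (q + 1) (s + 1), F l =
      ∑ l ∈ strictSeqs (q + 1) s, F l + ∑ l ∈ strictSeqs q s, F (Fin.snoc l s) := by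
  have hsnoc : ∀ l, Fin.snoc l s ∈ strictSeqs (q + 1) (s + 1) ↔ l ∈ strictSeqs q s := by
    intro l
    simp only [mem_strictSeqs, Fin.strictMono_snoc_iff, Fin.forall_fin_succ', Fin.snoc_castSucc,
      Fin.snoc_last]
    exact ⟨fun ⟨_, ⟨hl, hs⟩⟩ => ⟨hs, hl⟩,
      fun ⟨hs, hl⟩ => ⟨⟨fun i => (hs i).trans (Nat.lt_succ_self s), Nat.lt_succ_self s⟩, hl, hs⟩⟩
  have hbelow : (strictSeqs (q + 1) (s + 1)).filter (¬ · (Fin.last q) = s) = strictSeqs (q + 1) s :=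
    filter_last_ne_eq_filter_piFinset_range fun _ => StrictMono.monotone
  rw [← sum_filter_not_add_sum_filter _ (· (Fin.last q) = s), hbelow,
    sum_filter_last_eq_sum_snoc hsnoc]

lemma sum_monoSeqs_succ {q s : ℕ} (F : (Fin (q + 1) → ℕ) → M) :
    ∑ l ∈ monoSeqs (q + 1) (s + 1), F l =
      ∑ l ∈ monoSeqs (q + 1) s, F l + ∑ l ∈ monoSeqs q (s + 1), F (Fin.snoc l s) := by
  have hsnoc : ∀ l, Fin.snoc l s ∈ monoSeqs (q + 1) (s + 1) ↔ l ∈ monoSeqs q (s + 1) := by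
    intro l
    simp only [mem_monoSeqs, Fin.monotone_snoc_iff, Fin.forall_fin_succ', Fin.snoc_castSucc,
      Fin.snoc_last, Nat.lt_succ_iff]
    exact ⟨fun ⟨⟨hs, _⟩, hl⟩ => ⟨hs, hl.1⟩, fun ⟨hs, hl⟩ => ⟨⟨hs, le_rfl⟩, hl, hs⟩⟩
  have hbelow : (monoSeqs (q + 1) (s + 1)).filter (¬ · (Fin.last q) = s) = monoSeqs (q + 1) s :=
    filter_last_ne_eq_filter_piFinset_range fun _ => id
  rw [← sum_filter_not_add_sum_filter _ (· (Fin.last q) = s), hbelow,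
    sum_filter_last_eq_sum_snoc hsnoc]

end Sequences

section PartialSums

def prefixSum {p : ℕ} (c : Fin p → ℕ) (i : Fin p) : ℤ := ∑ j ∈ Iio i, (c j : ℤ)

def suffixSum {p : ℕ} (c : Fin p → ℕ) (i : Fin p) : ℤ := ∑ j ∈ Ioi i, (c j : ℤ)

variable {q : ℕ} (c : Fin q → ℕ) (r : ℕ)

lemma prefixSum_snoc_castSucc (i : Fin q) :
    prefixSum (Fin.snoc c r : Fin (q + 1) → ℕ) i.castSucc = prefixSum c i := by
  simp [prefixSum, Fin.sum_Iio_castSucc]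

lemma prefixSum_snoc_last :
    prefixSum (Fin.snoc c r : Fin (q + 1) → ℕ) (Fin.last q) = ((∑ i, c i : ℕ) : ℤ) := by
  rw [prefixSum, Fin.Iio_last_eq_map, sum_map]
  simp

lemma suffixSum_snoc_castSucc (i : Fin q) :
    suffixSum (Fin.snoc c r : Fin (q + 1) → ℕ) i.castSucc = suffixSum c i + r := by
  rw [suffixSum, Ioi_eq_Ioc, Fin.top_eq_last, ← Ioo_insert_right (Fin.castSucc_lt_last i),
    sum_insert (by simp), ← Fin.map_castSuccEmb_Ioi, sum_map, add_comm]
  simp [suffixSum]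

lemma suffixSum_snoc_last : suffixSum (Fin.snoc c r : Fin (q + 1) → ℕ) (Fin.last q) = 0 := by
  rw [suffixSum, ← Fin.top_eq_last, Ioi_top, sum_empty]

end PartialSums

section PathSums

variable {R : Type*} [CommRing R] (y : ℕ → ℤ → R) (n h : ℤ)

def tWeight {p : ℕ} (c l : Fin p → ℕ) (α : ℤ) : R :=
  ∏ i, y (c i) ((l i : ℤ) * h + prefixSum c i * n + α)

def sWeight {p : ℕ} (c l : Fin p → ℕ) (α : ℤ) : R :=
  ∏ i, y (c i) ((l i : ℤ) * h + suffixSum c i * n + α)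

def Tseries (s : ℕ) : ℕ → ℤ → R := fun k α =>
  ∑ p ∈ range (k + 1), ∑ c ∈ compositions k p, ∑ l ∈ strictSeqs p s, tWeight y n h c l α

-- `Sseries` omits the factor `(-1)^k` of `Spoly`, which `signTwist` restores.
def Sseries (s : ℕ) : ℕ → ℤ → R := fun k α =>
  ∑ p ∈ range (k + 1), (-1) ^ p *
    ∑ c ∈ compositions k p, ∑ l ∈ monoSeqs p s, sWeight y n h c l α

def stepSeries (s : ℕ) : ℕ → ℤ → R := fun k α => if k = 0 then 1 else y k (s * h + α)

variable {y n h}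

lemma tWeight_snoc {q : ℕ} (c l : Fin q → ℕ) (r x : ℕ) (α : ℤ) :
    tWeight y n h (Fin.snoc c r : Fin (q + 1) → ℕ) (Fin.snoc l x) α =
      tWeight y n h c l α * y r (x * h + ((∑ i, c i : ℕ) : ℤ) * n + α) := by
  simp [tWeight, Fin.prod_univ_castSucc, prefixSum_snoc_castSucc, prefixSum_snoc_last]

lemma sWeight_snoc {q : ℕ} (c l : Fin q → ℕ) (r x : ℕ) (α : ℤ) :
    sWeight y n h (Fin.snoc c r : Fin (q + 1) → ℕ) (Fin.snoc l x) α =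
      sWeight y n h c l (α + r * n) * y r (x * h + α) := by
  simp only [sWeight, Fin.prod_univ_castSucc, Fin.snoc_castSucc, Fin.snoc_last,
    suffixSum_snoc_castSucc, suffixSum_snoc_last]
  congr 1
  · refine prod_congr rfl fun i _ => congrArg _ (by ring)
  · congr 1; ring

lemma Tseries_succ_apply (s k : ℕ) (α : ℤ) :
    Tseries y n h (s + 1) k α = Tseries y n h s k α +
      ∑ q ∈ range k, ∑ c ∈ compositions k (q + 1), ∑ l ∈ strictSeqs q s,
        tWeight y n h c (Fin.snoc l s) α := by
  simp only [Tseries, sum_range_succ' _ k, sum_strictSeqs_succ, sum_add_distrib,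
    strictSeqs_zero_left]
  abel

lemma sum_tWeight_snoc_last (s k : ℕ) (α : ℤ) :
    ∑ q ∈ range k, ∑ c ∈ compositions k (q + 1), ∑ l ∈ strictSeqs q s,
        tWeight y n h c (Fin.snoc l s) α =
      ∑ j ∈ range k, Tseries y n h s j α * y (k - j) (s * h + (α + j * n)) := by
  calc _ = ∑ q ∈ range k, ∑ j ∈ range k, ∑ c ∈ compositions j q, ∑ l ∈ strictSeqs q s,
          tWeight y n h c l α * y (k - j) (s * h + (α + j * n)) := by
        refine sum_congr rfl fun q _ => ?_
        rw [sum_compositions_succ]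
        refine sum_congr rfl fun j _ => sum_congr rfl fun c hc => sum_congr rfl fun l _ => ?_
        rw [tWeight_snoc, (mem_compositions.1 hc).2]
        ring_nf
    _ = _ := by
        rw [sum_comm]
        refine sum_congr rfl fun j hj => ?_
        rw [Tseries, ← sum_range_sum_compositions (mem_range.1 hj), sum_mul]
        simp only [sum_mul]

lemma Tseries_succ (s : ℕ) :
    Tseries y n h (s + 1) = shiftConv n (Tseries y n h s) (stepSeries y h s) := by
  funext k α
  rw [Tseries_succ_apply, sum_tWeight_snoc_last, shiftConv,
    Nat.sum_antidiagonal_eq_sum_range_succ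
      (fun i j => Tseries y n h s i α * stepSeries y h s j (α + i * n)),
    sum_range_succ, add_comm]
  congr 1
  · refine sum_congr rfl fun j hj => ?_
    rw [stepSeries, if_neg (Nat.sub_ne_zero_of_lt (mem_range.1 hj))]
  · simp [stepSeries]

lemma Sseries_succ_apply (s k : ℕ) (α : ℤ) :
    Sseries y n h (s + 1) k α = Sseries y n h s k α +
      ∑ q ∈ range k, (-1) ^ (q + 1) * ∑ c ∈ compositions k (q + 1), ∑ l ∈ monoSeqs q (s + 1),
        sWeight y n h c (Fin.snoc l s) α := by
  simp only [Sseries, sum_range_succ' _ k, sum_monoSeqs_succ, sum_add_distrib, mul_add,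
    monoSeqs_zero_left]
  abel

lemma sum_sWeight_snoc_last (s k : ℕ) (α : ℤ) :
    ∑ q ∈ range k, (-1) ^ (q + 1) * ∑ c ∈ compositions k (q + 1), ∑ l ∈ monoSeqs q (s + 1),
        sWeight y n h c (Fin.snoc l s) α =
      -∑ j ∈ range k, y (k - j) (s * h + α) * Sseries y n h (s + 1) j (α + (k - j : ℕ) * n) := by
  calc _ = -∑ q ∈ range k, ∑ j ∈ range k, (-1) ^ q * ∑ c ∈ compositions j q,
          ∑ l ∈ monoSeqs q (s + 1),
            y (k - j) (s * h + α) * sWeight y n h c l (α + (k - j : ℕ) * n) := by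
        rw [← sum_neg_distrib]
        refine sum_congr rfl fun q _ => ?_
        rw [sum_compositions_succ, pow_succ, mul_neg_one, neg_mul, mul_sum]
        simp only [sWeight_snoc, mul_comm]
    _ = _ := by
        rw [sum_comm]
        refine congrArg _ (sum_congr rfl fun j hj => ?_)
        simp only [Sseries, mul_sum]
        rw [← sum_range_sum_compositions (mem_range.1 hj)]
        exact sum_congr rfl fun p _ => sum_congr rfl fun c _ => sum_congr rfl fun l _ => by ring

lemma Sseries_succ (s : ℕ) :
    Sseries y n h s = shiftConv n (stepSeries y h s) (Sseries y n h (s + 1)) := by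
  funext k α
  have hpeel := Sseries_succ_apply (y := y) (n := n) (h := h) s k α
  rw [sum_sWeight_snoc_last] at hpeel
  rw [shiftConv, ← Nat.sum_antidiagonal_swap]
  simp only [Prod.fst_swap, Prod.snd_swap]
  rw [Nat.sum_antidiagonal_eq_sum_range_succ
      (fun j i => stepSeries y h s i α * Sseries y n h (s + 1) j (α + i * n)), sum_range_succ]
  simp only [Nat.sub_self, stepSeries, Nat.cast_zero, zero_mul, add_zero, if_true, one_mul]
  rw [sum_congr rfl fun j hj => by rw [if_neg (Nat.sub_ne_zero_of_lt (mem_range.1 hj))]]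
  linear_combination -hpeel

lemma Tseries_zero : Tseries y n h 0 = convOne := by
  funext k α
  by_cases hk : k = 0 <;>
    simp [Tseries, sum_range_succ', strictSeqs_zero_left, strictSeqs_zero_right,
      compositions_zero_right, convOne, tWeight, hk]

lemma Sseries_zero : Sseries y n h 0 = convOne := by
  funext k α
  by_cases hk : k = 0 <;>
    simp [Sseries, sum_range_succ', monoSeqs_zero_left, monoSeqs_zero_right,
      compositions_zero_right, convOne, sWeight, hk]

lemma shiftConv_Tseries_Sseries (s : ℕ) :
    shiftConv n (Tseries y n h s) (Sseries y n h s) = convOne := by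
  induction s with
  | zero => rw [Tseries_zero, Sseries_zero, convOne_shiftConv]
  | succ s ih => rw [Tseries_succ, shiftConv_assoc, ← Sseries_succ, ih]

lemma Tseries_eq_convOne_add_Tpoly (s k : ℕ) (α : ℤ) :
    Tseries y n h s k α = convOne k α + Tpoly (shiftVar y α) n h k s := by
  rw [Tseries, sum_range_eq_add_Ico _ k.add_one_pos, Ico_add_one_right_eq_Icc, Tpoly]
  congr 1
  · by_cases hk : k = 0 <;>
      simp [compositions_zero_right, strictSeqs_zero_left, tWeight, convOne, hk]
  · refine sum_congr rfl fun p _ => Eq.symm ?_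
    calc _ = ∑ K ∈ comps k p, ∑ l ∈ strictSeqs p s, tWeight y n h (fun i => (K i : ℕ)) l α :=
          sum_congr rfl fun K _ =>
            sum_filter_univ_val_eq (P := StrictMono) (fun _ => Iff.rfl)
              fun l => tWeight y n h _ l α
      _ = _ := sum_filter_univ_val_eq (P := fun c => (∀ i, 1 ≤ c i) ∧ ∑ i, c i = k)
          (fun _ => Iff.rfl) fun c => ∑ l ∈ strictSeqs p s, tWeight y n h c l α

lemma signTwist_Sseries_eq_convOne_add_Spoly (s k : ℕ) (α : ℤ) :
    signTwist (Sseries y n h s) k α = convOne k α + Spoly (shiftVar y α) n h k s := by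
  rw [signTwist, Sseries, sum_range_eq_add_Ico _ k.add_one_pos, Ico_add_one_right_eq_Icc, Spoly,
    mul_add]
  congr 1
  · by_cases hk : k = 0 <;>
      simp [compositions_zero_right, monoSeqs_zero_left, sWeight, convOne, hk]
  · refine congrArg _ (sum_congr rfl fun p _ => congrArg _ (Eq.symm ?_))
    calc _ = ∑ K ∈ comps k p, ∑ l ∈ monoSeqs p s, sWeight y n h (fun i => (K i : ℕ)) l α :=
          sum_congr rfl fun K _ =>
            sum_filter_univ_val_eq (P := Monotone) (fun _ => Iff.rfl)
              fun l => sWeight y n h _ l α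
      _ = _ := sum_filter_univ_val_eq (P := fun c => (∀ i, 1 ≤ c i) ∧ ∑ i, c i = k)
          (fun _ => Iff.rfl) fun c => ∑ l ∈ monoSeqs p s, sWeight y n h c l α

end PathSums

lemma Tpoly_zero {R : Type*} [CommRing R] (y : ℕ → ℤ → R) (n h : ℤ) (s : ℕ) :
    Tpoly y n h 0 s = 0 := by
  simp [Tpoly]

lemma Spoly_zero {R : Type*} [CommRing R] (y : ℕ → ℤ → R) (n h : ℤ) (s : ℕ) :
    Spoly y n h 0 s = 0 := by
  simp [Spoly]

lemma shiftVar_zero {R : Type*} (y : ℕ → ℤ → R) : shiftVar y 0 = y := by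
  funext r j
  rw [shiftVar, add_zero]

theorem Spoly_Tpoly_inverse_general {R : Type*} [CommRing R] (y : ℕ → ℤ → R) (n h : ℤ)
    (k s : ℕ) (hk : 1 ≤ k) :
    Spoly y n h k s +
      (∑ j ∈ Finset.Ico 1 k,
        (-1 : R) ^ j * Tpoly y n h j s * Spoly (shiftVar y ((j : ℤ) * n)) n h (k - j) s) +
      (-1 : R) ^ k * Tpoly y n h k s = 0 := by
  have key : shiftConv n (signTwist (Tseries y n h s)) (signTwist (Sseries y n h s)) k 0 = 0 := by
    rw [← signTwist_shiftConv, shiftConv_Tseries_Sseries, signTwist_convOne, convOne,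
      if_neg (by omega)]
  rw [shiftConv, Nat.sum_antidiagonal_eq_sum_range_succ
      (fun i j => signTwist (Tseries y n h s) i 0 * signTwist (Sseries y n h s) j (0 + i * n)),
    sum_range_succ, sum_range_eq_add_Ico _ hk] at key
  rw [← key]
  simp only [signTwist_Sseries_eq_convOne_add_Spoly]
  simp only [signTwist, Tseries_eq_convOne_add_Tpoly, shiftVar_zero, zero_add]
  have hk0 : k ≠ 0 := by omega
  congr 1
  congr 1
  · simp [convOne, hk0, Tpoly_zero, shiftVar_zero]
  · refine sum_congr rfl fun j hj => ?_
    obtain ⟨hj1, hjk⟩ := mem_Ico.1 hj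
    simp [convOne, Nat.pos_iff_ne_zero.1 hj1, Nat.sub_ne_zero_of_lt hjk]
  · simp [convOne, hk0, Spoly_zero]

/-- `S^k_s + Σ_{j=1}^{k-1} (-1)^j T^j_s S^{k-j, jn}_s + (-1)^k T^k_s = 0`. -/
theorem Spoly_Tpoly_inverse {R : Type*} [CommRing R] (y : ℕ → ℤ → R) (n h : ℤ)
    (hn : 1 ≤ n) (hh : 1 ≤ h) (k s : ℕ) (hk : 1 ≤ k) (hs : 1 ≤ s) :
    Spoly y n h k s +
      (∑ j ∈ Finset.Ico 1 k,
        (-1 : R) ^ j * Tpoly y n h j s * Spoly (shiftVar y ((j : ℤ) * n)) n h (k - j) s) +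
      (-1 : R) ^ k * Tpoly y n h k s = 0 :=
  Spoly_Tpoly_inverse_general y n h k s hk
end

section
/- For every k ≥ 1 and s ≥ 1, S^k_s = (-1)^k Σ_K (-1)^p T^{k_1}_s · T^{k_2, k_1 n}_s ⋯ T^{k_p, (k_1+...+k_{p-1})n}_s, where the sum is over all compositions K=(k_1,...,k_p) of k. -/
open Finset

/-!
Write `T_α(k)` (`incSum`) for `T^{k,α}_s`, extended by `T_α(0) = 1`, and `C_α(k)` (`decSum`) for
the signed sum over weakly decreasing words; reversing every word and its composition turns
`S^k_s` into `(-1)^k C_0(k)`. For the shifted convolution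
`(F ⋆ G)_α(k) = Σ_j F_α(j) G_{α+jn}(k-j)`, both `C` and
`A_α(k) = Σ_K (-1)^p T_α(k_1) T_{α+k_1 n}(k_2) ⋯` (`compSum`) are right `⋆`-inverses of `T`.
For `A` this follows by splitting off the first part of `K`. For `C`, expanding `T ⋆ C` produces
every word together with a cut point `t` such that the letters before `t` strictly increase and
those from `t` on weakly decrease. A nonempty word has either no such cut point or two adjacent
ones, which carry opposite signs. Since `T_α(0) = 1`, right inverses are unique, so `A = C`.
-/

open Finset

namespace WordSums

/-- Compositions with parts in `ℕ` rather than `Fin (k + 1)`, so that splitting a composition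
of `k` yields compositions of `j` and of `k - j`. -/
def natComps (k p : ℕ) : Finset (Fin p → ℕ) :=
  (Fintype.piFinset fun _ => range (k + 1)).filter fun K => (∀ i, 1 ≤ K i) ∧ ∑ i, K i = k

theorem mem_natComps {k p : ℕ} {K : Fin p → ℕ} :
    K ∈ natComps k p ↔ (∀ i, 1 ≤ K i) ∧ ∑ i, K i = k := by
  refine ⟨fun hK => (mem_filter.mp hK).2, fun hK => mem_filter.mpr ⟨?_, hK⟩⟩
  refine Fintype.mem_piFinset.mpr fun i => mem_range.mpr ?_
  have := single_le_sum (fun j _ => Nat.zero_le (K j)) (mem_univ i)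
  omega

theorem natComps_eq_empty_of_lt {k p : ℕ} (h : k < p) : natComps k p = ∅ := by
  refine eq_empty_of_forall_notMem fun K hK => ?_
  obtain ⟨hpos, hsum⟩ := mem_natComps.mp hK
  have : ∑ _i : Fin p, 1 ≤ ∑ i, K i := sum_le_sum fun i _ => hpos i
  simp at this
  omega

theorem natComps_zero_right {k : ℕ} (hk : k ≠ 0) : natComps k 0 = ∅ := by
  refine eq_empty_of_forall_notMem fun K hK => hk ?_
  simpa using (mem_natComps.mp hK).2.symm

theorem natComps_zero_zero : natComps 0 0 = {Fin.elim0} := by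
  ext K
  simp [mem_natComps, Subsingleton.elim K Fin.elim0]

theorem natComps_one {j : ℕ} (hj : j ≠ 0) : natComps j 1 = {fun _ => j} := by
  ext K
  simp only [mem_natComps, mem_singleton, Fin.forall_fin_one, Fin.sum_univ_one]
  refine ⟨fun hK => funext fun i => by rw [Fin.fin_one_eq_zero i, hK.2], ?_⟩
  rintro rfl
  exact ⟨Nat.one_le_iff_ne_zero.mpr hj, rfl⟩

theorem mem_natComps_append {k t r : ℕ} {J : Fin t → ℕ} {L : Fin r → ℕ} :
    Fin.append J L ∈ natComps k (t + r) ↔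
      (∀ i, 1 ≤ J i) ∧ (∀ i, 1 ≤ L i) ∧ ∑ i, J i + ∑ i, L i = k := by
  simp [mem_natComps, Fin.forall_fin_add, Fin.sum_univ_add, and_assoc]

theorem sum_natComps_add {M : Type*} [AddCommMonoid M] (k t r : ℕ)
    (f : (Fin (t + r) → ℕ) → M) :
    ∑ K ∈ natComps k (t + r), f K =
      ∑ j ∈ range (k + 1), ∑ J ∈ natComps j t, ∑ L ∈ natComps (k - j) r,
        f (Fin.append J L) := by
  have hmaps : ∀ K ∈ natComps k (t + r), ∑ i, K (Fin.castAdd r i) ∈ range (k + 1) := by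
    intro K hK
    have := (mem_natComps.mp hK).2
    rw [Fin.sum_univ_add] at this
    exact mem_range.mpr (by omega)
  rw [← sum_fiberwise_of_maps_to hmaps]
  refine sum_congr rfl fun j hj => ?_
  rw [← sum_product' (f := fun J L => f (Fin.append J L))]
  refine (sum_equiv (Fin.appendEquiv t r) (fun JL => ?_) (fun _ _ => rfl)).symm
  have := mem_range.mp hj
  obtain ⟨J, L⟩ := JL
  rw [mem_product, mem_filter]
  change J ∈ natComps j t ∧ L ∈ natComps (k - j) r ↔
    Fin.append J L ∈ natComps k (t + r) ∧ ∑ i, Fin.append J L (Fin.castAdd r i) = j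
  rw [mem_natComps_append, mem_natComps, mem_natComps]
  simp only [Fin.append_left]
  constructor
  · rintro ⟨⟨hJ, hJs⟩, hL, hLs⟩
    exact ⟨⟨hJ, hL, by omega⟩, hJs⟩
  · rintro ⟨⟨hJ, hL, hs⟩, hJs⟩
    exact ⟨⟨hJ, hJs⟩, hL, by omega⟩

theorem sum_natComps_one_add {M : Type*} [AddCommMonoid M] (k p : ℕ)
    (f : (Fin (1 + p) → ℕ) → M) :
    ∑ K ∈ natComps k (1 + p), f K =
      ∑ j ∈ range k, ∑ L ∈ natComps (k - (j + 1)) p, f (Fin.append (fun _ => j + 1) L) := by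
  rw [sum_natComps_add, sum_range_succ', natComps_eq_empty_of_lt zero_lt_one, sum_empty, add_zero]
  simp [natComps_one]

theorem sum_natComps_comp_rev {M : Type*} [AddCommMonoid M] (k p : ℕ)
    (f : (Fin p → ℕ) → M) :
    ∑ K ∈ natComps k p, f (K ∘ Fin.rev) = ∑ K ∈ natComps k p, f K := by
  refine sum_nbij' (· ∘ Fin.rev) (· ∘ Fin.rev) (fun K hK => ?_) (fun K hK => ?_)
    (fun K _ => by ext; simp) (fun K _ => by ext; simp) (fun _ _ => rfl)
  all_goals
    obtain ⟨hpos, hsum⟩ := mem_natComps.mp hK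
    exact mem_natComps.mpr ⟨fun i => hpos _,
      by rw [← hsum]; exact Fintype.sum_equiv Fin.revPerm _ _ fun _ => rfl⟩

theorem sum_comps_eq_sum_natComps {M : Type*} [AddCommMonoid M] (k p : ℕ)
    (f : (Fin p → ℕ) → M) :
    ∑ K ∈ comps k p, f (fun i => K i) = ∑ K ∈ natComps k p, f K := by
  refine sum_nbij (fun K i => K i) (fun K hK => ?_) (fun K _ L _ hKL => ?_) (fun K hK => ?_)
    (fun _ _ => rfl)
  · exact mem_natComps.mpr (mem_filter.mp hK).2
  · exact funext fun i => Fin.ext (congrFun hKL i)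
  · obtain ⟨hpos, hsum⟩ := mem_natComps.mp hK
    have hle : ∀ i, K i < k + 1 := fun i => by
      have := single_le_sum (fun j _ => Nat.zero_le (K j)) (mem_univ i)
      omega
    exact ⟨fun i => ⟨K i, hle i⟩, mem_filter.mpr ⟨mem_univ _, hpos, hsum⟩, rfl⟩

theorem sum_range_eq_of_natComps_eq_empty {M : Type*} [AddCommMonoid M] {k N : ℕ} (hN : k < N)
    (g : ℕ → M) (hg : ∀ p, natComps k p = ∅ → g p = 0) :
    ∑ p ∈ range (k + 1), g p = ∑ p ∈ range N, g p := by
  refine sum_subset (range_subset_range.mpr hN) fun p hpN hpk => hg p ?_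
  exact natComps_eq_empty_of_lt (by rw [mem_range] at hpN hpk; omega)

theorem sum_range_succ_eq_sum_Icc_of_apply_zero {M : Type*} [AddCommMonoid M] (g : ℕ → M) (h0 : g 0 = 0)
    (k : ℕ) : ∑ p ∈ range (k + 1), g p = ∑ p ∈ Icc 1 k, g p := by
  rw [range_eq_Ico, sum_eq_sum_Ico_succ_bot (Nat.succ_pos k), h0, zero_add]
  rfl

theorem sum_range_sum_range_eq_sum_range_sum_range_sub {M : Type*} [AddCommMonoid M] (k : ℕ)
    (G : ℕ → ℕ → M) (hG : ∀ t r, k < t + r → G t r = 0) :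
    ∑ t ∈ range (k + 1), ∑ r ∈ range (k + 1), G t r =
      ∑ q ∈ range (k + 1), ∑ t ∈ range (q + 1), G t (q - t) := by
  have hrow : ∀ t ∈ range (k + 1),
      ∑ r ∈ range (k + 1), G t r = ∑ q ∈ Ico t (k + 1), G t (q - t) := by
    intro t ht
    rw [sum_Ico_eq_sum_range]
    simp only [add_tsub_cancel_left]
    exact (sum_subset (range_subset_range.mpr (by omega)) fun r _ hr =>
      hG t r (by simp at hr; omega)).symm
  rw [sum_congr rfl hrow, range_eq_Ico, sum_Ico_Ico_comm]
  simp only [Nat.Ico_zero_eq_range]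

def natPrefSum {p : ℕ} (K : Fin p → ℕ) (i : Fin p) : ℤ :=
  ∑ j ∈ Iio i, (K j : ℤ)

theorem natPrefSum_append_castAdd {t r : ℕ} (J : Fin t → ℕ) (L : Fin r → ℕ) (i : Fin t) :
    natPrefSum (Fin.append J L) (Fin.castAdd r i) = natPrefSum J i := by
  simp [natPrefSum, Fin.sum_Iio_castAdd]

theorem natPrefSum_append_natAdd {t r : ℕ} (J : Fin t → ℕ) (L : Fin r → ℕ) (i : Fin r) :
    natPrefSum (Fin.append J L) (Fin.natAdd t i) = ∑ j, (J j : ℤ) + natPrefSum L i := by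
  have hIio : ∀ {m : ℕ} (a : Fin m), Iio a = univ.filter (· < a) := fun a => by ext; simp
  have hlt : ∀ j : Fin t, Fin.castAdd r j < Fin.natAdd t i := fun j => by
    simp only [Fin.lt_def, Fin.val_castAdd, Fin.val_natAdd]; omega
  simp [natPrefSum, hIio, sum_filter, Fin.sum_univ_add, hlt]

theorem natPrefSum_comp_rev {p : ℕ} (K : Fin p → ℕ) (i : Fin p) :
    natPrefSum (K ∘ Fin.rev) i.rev = ∑ j ∈ Ioi i, (K j : ℤ) := by
  simp [natPrefSum, ← Fin.map_revPerm_Ioi]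

def strictIncWords (s q : ℕ) : Finset (Fin q → Fin s) :=
  univ.filter fun lam => ∀ i j, i < j → lam i < lam j

def antitoneWords (s q : ℕ) : Finset (Fin q → Fin s) :=
  univ.filter fun lam => ∀ i j, i ≤ j → lam j ≤ lam i

def monotoneWords (s q : ℕ) : Finset (Fin q → Fin s) :=
  univ.filter fun lam => ∀ i j, i ≤ j → lam i ≤ lam j

def upDownWords (s q t : ℕ) : Finset (Fin q → Fin s) :=
  univ.filter fun lam => (∀ i j : Fin q, i < j → (j : ℕ) < t → lam i < lam j) ∧
    ∀ i j : Fin q, t ≤ (i : ℕ) → i ≤ j → lam j ≤ lam i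

theorem append_mem_upDownWords {s t r : ℕ} {u : Fin t → Fin s} {v : Fin r → Fin s} :
    Fin.append u v ∈ upDownWords s (t + r) t ↔
      u ∈ strictIncWords s t ∧ v ∈ antitoneWords s r := by
  have hcast : ∀ {i j : Fin t}, Fin.castAdd r i < Fin.castAdd r j ↔ i < j := Iff.rfl
  have hcross : ∀ (i : Fin t) (j : Fin r), Fin.castAdd r i < Fin.natAdd t j := fun i j => by
    simp only [Fin.lt_def, Fin.val_castAdd, Fin.val_natAdd]; omega
  simp [upDownWords, strictIncWords, antitoneWords, Fin.forall_fin_add, hcast,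
    (hcross _ _).not_gt, (hcross _ _).not_ge]

theorem sum_upDownWords_add {M : Type*} [AddCommMonoid M] (s t r : ℕ)
    (f : (Fin (t + r) → Fin s) → M) :
    ∑ lam ∈ upDownWords s (t + r) t, f lam =
      ∑ u ∈ strictIncWords s t, ∑ v ∈ antitoneWords s r, f (Fin.append u v) := by
  rw [← sum_product' (f := fun u v => f (Fin.append u v))]
  exact (sum_equiv (Fin.appendEquiv t r) (fun _ => mem_product.trans append_mem_upDownWords.symm)
    (fun _ _ => rfl)).symm

theorem sum_antitoneWords_eq_sum_monotoneWords {M : Type*} [AddCommMonoid M] (s q : ℕ)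
    (f : (Fin q → Fin s) → M) :
    ∑ lam ∈ antitoneWords s q, f lam = ∑ lam ∈ monotoneWords s q, f (lam ∘ Fin.rev) := by
  refine sum_nbij' (· ∘ Fin.rev) (· ∘ Fin.rev) (fun lam hlam => ?_) (fun lam hlam => ?_)
    (fun K _ => by ext; simp) (fun K _ => by ext; simp) (fun lam _ => by simp [Function.comp_def])
  all_goals
    simp only [antitoneWords, monotoneWords, mem_filter, mem_univ, true_and] at hlam ⊢
    exact fun i j hij => hlam _ _ (Fin.rev_le_rev.mpr hij)

/-- The `t` with `P t ∧ Q t` are either none or `c, c + 1`, where `c` is the least `t` with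
`Q t`. -/
theorem sum_range_ite_neg_one_pow_eq_zero {M : Type*} [Ring M] {q : ℕ} (P Q : ℕ → Prop)
    [DecidablePred P] [DecidablePred Q] (hP : Antitone P) (hQ : Monotone Q) (hP1 : P 1)
    (hQq : Q (q - 1)) (hPQ : ∀ t, t + 2 ≤ q → P (t + 2) → ¬ Q t)
    (hstep : ∀ t, 1 ≤ t → t < q → P t → Q t → P (t + 1) ∨ Q (t - 1)) (hq : q ≠ 0) :
    ∑ t ∈ range (q + 1), (if P t ∧ Q t then (-1 : M) ^ (q - t) else 0) = 0 := by
  have hex : ∃ t, Q t := ⟨q - 1, hQq⟩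
  set c := Nat.find hex
  have hc : Q c := Nat.find_spec hex
  have hcq : c + 1 ≤ q := by have := Nat.find_min' hex hQq; omega
  have hsucc : P (c + 1) ∧ Q (c + 1) ↔ P c ∧ Q c := by
    refine ⟨fun h => ⟨hP (Nat.le_succ c) h.1, hc⟩, fun h => ⟨?_, hQ (Nat.le_succ c) hc⟩⟩
    rcases Nat.eq_zero_or_pos c with hc0 | hc0
    · rwa [hc0]
    · exact (hstep c hc0 (by omega) h.1 h.2).resolve_right (Nat.find_min hex (by omega))
  have hpair : ∀ t ≤ q, P t ∧ Q t → t = c ∨ t = c + 1 := by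
    intro t htq ht
    have hct : c ≤ t := Nat.find_min' hex ht.2
    by_contra hne
    exact hPQ c (by omega) (hP (by omega) ht.1) hc
  rw [← sum_subset (s₁ := {c, c + 1}) (by simp [insert_subset_iff]; omega)
    (fun t ht hnot => if_neg fun hPQt => hnot (by
      simpa using hpair t (Nat.lt_succ_iff.mp (mem_range.mp ht)) hPQt)),
    sum_pair (by omega)]
  simp only [hsucc]
  split_ifs
  · rw [show q - c = q - (c + 1) + 1 by omega, pow_succ, mul_neg_one, neg_add_cancel]
  · simp

theorem sum_range_ite_mem_upDownWords {M : Type*} [Ring M] {s q : ℕ} (hq : q ≠ 0)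
    (lam : Fin q → Fin s) :
    ∑ t ∈ range (q + 1), (if lam ∈ upDownWords s q t then (-1 : M) ^ (q - t) else 0) = 0 := by
  simp only [upDownWords, mem_filter, mem_univ, true_and]
  refine sum_range_ite_neg_one_pow_eq_zero _ _ ?_ ?_ ?_ ?_ ?_ ?_ hq
  · exact fun a b hab hb i j hij hj => hb i j hij (by omega)
  · exact fun a b hab ha i j hi hij => ha i j (by omega) hij
  · exact fun i j hij hj => absurd (Fin.lt_def.mp hij) (by omega)
  · exact fun i j hi hij => le_of_eq (congrArg lam (Fin.ext (by have := j.isLt; omega)))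
  · intro t ht hinc hdec
    exact (hdec ⟨t, by omega⟩ ⟨t + 1, by omega⟩ le_rfl (Fin.mk_le_mk.mpr (by omega))).not_gt
      (hinc _ _ (Fin.mk_lt_mk.mpr (by omega)) (by simp))
  · intro t ht htq hinc hdec
    set a : Fin q := ⟨t - 1, by omega⟩
    set b : Fin q := ⟨t, htq⟩
    by_cases hab : lam a < lam b
    · left
      intro i j hij hj
      rcases Nat.lt_or_ge j t with hjt | hjt
      · exact hinc i j hij hjt
      · obtain rfl : j = b := Fin.ext (by simp [b]; omega)
        rcases eq_or_ne i a with rfl | hia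
        · exact hab
        · have hia' : (i : ℕ) ≠ t - 1 := fun h => hia (Fin.ext h)
          have hib : (i : ℕ) < t := hij
          exact (hinc i a (Fin.lt_def.mpr (by simp only [a]; omega))
            (by simp only [a]; omega)).trans hab
    · right
      intro i j hi hij
      rcases Nat.lt_or_ge i t with hit | hit
      · obtain rfl : i = a := Fin.ext (by simp [a]; omega)
        rcases eq_or_ne j a with rfl | hja
        · exact le_rfl
        · have hja' : (j : ℕ) ≠ t - 1 := fun h => hja (Fin.ext h)
          have hij' : t - 1 ≤ (j : ℕ) := hij
          exact (hdec b j le_rfl (Fin.le_def.mpr (by simp only [b]; omega))).trans (not_lt.mp hab)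
      · exact hdec i j hit hij

theorem sum_range_neg_one_pow_mul_sum_upDownWords {M : Type*} [Ring M] {s q : ℕ}
    (hq : q ≠ 0) (f : (Fin q → Fin s) → M) :
    ∑ t ∈ range (q + 1), (-1 : M) ^ (q - t) * ∑ lam ∈ upDownWords s q t, f lam = 0 := by
  calc ∑ t ∈ range (q + 1), (-1 : M) ^ (q - t) * ∑ lam ∈ upDownWords s q t, f lam
      = ∑ lam, (∑ t ∈ range (q + 1),
          if lam ∈ upDownWords s q t then (-1 : M) ^ (q - t) else 0) * f lam := by
        have hU : ∀ t, ∑ lam ∈ upDownWords s q t, f lam =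
            ∑ lam, if lam ∈ upDownWords s q t then f lam else 0 := fun t => by
          rw [sum_ite_mem, univ_inter]
        simp only [hU, mul_sum, sum_mul, ite_mul, zero_mul, mul_ite, mul_zero]
        exact sum_comm
    _ = 0 := by simp [sum_range_ite_mem_upDownWords hq]

section ShiftConv

variable {R : Type*} [Ring R]

def shiftConv (n : ℤ) (F G : ℤ → ℕ → R) (α : ℤ) (k : ℕ) : R :=
  ∑ j ∈ range (k + 1), F α j * G (α + j * n) (k - j)

theorem shiftConv_left_cancel {n : ℤ} {F G G' : ℤ → ℕ → R} (hF : ∀ α, F α 0 = 1)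
    (h : shiftConv n F G = shiftConv n F G') : G = G' := by
  funext α k
  induction k using Nat.strong_induction_on generalizing α with
  | _ k ih =>
    have hk := congrFun (congrFun h α) k
    simp only [shiftConv, sum_range_succ', hF, Nat.cast_zero, zero_mul, add_zero, one_mul,
      Nat.sub_zero] at hk
    refine add_left_cancel (hk.trans (congrArg (· + G' α k) (sum_congr rfl fun j hj => ?_)).symm)
    rw [ih (k - (j + 1)) (by simp at hj; omega)]

end ShiftConv

section Sums

variable {R : Type*} [CommRing R] (y : ℕ → ℤ → R) (n h : ℤ) (s : ℕ)

def wordProd (α : ℤ) {q : ℕ} (K : Fin q → ℕ) (lam : Fin q → Fin s) : R :=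
  ∏ i, y (K i) (((lam i : ℕ) : ℤ) * h + natPrefSum K i * n + α)

def incSum (α : ℤ) (k : ℕ) : R :=
  ∑ q ∈ range (k + 1),
    ∑ K ∈ natComps k q, ∑ lam ∈ strictIncWords s q, wordProd y n h s α K lam

def decSum (α : ℤ) (k : ℕ) : R :=
  ∑ q ∈ range (k + 1), (-1) ^ q *
    ∑ K ∈ natComps k q, ∑ lam ∈ antitoneWords s q, wordProd y n h s α K lam

def compSum (α : ℤ) (k : ℕ) : R :=
  ∑ p ∈ range (k + 1), (-1) ^ p *
    ∑ K ∈ natComps k p, ∏ i, incSum y n h s (α + natPrefSum K i * n) (K i)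

theorem wordProd_append (α : ℤ) {t r : ℕ} (J : Fin t → ℕ) (L : Fin r → ℕ)
    (u : Fin t → Fin s) (v : Fin r → Fin s) :
    wordProd y n h s α (Fin.append J L) (Fin.append u v) =
      wordProd y n h s α J u * wordProd y n h s (α + (∑ i, (J i : ℤ)) * n) L v := by
  simp only [wordProd, Fin.prod_univ_add, Fin.append_left, Fin.append_right,
    natPrefSum_append_castAdd, natPrefSum_append_natAdd]
  congr 1
  exact prod_congr rfl fun i _ => congrArg _ (by ring)

theorem incSum_zero (α : ℤ) : incSum y n h s α 0 = 1 := by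
  simp [incSum, natComps_zero_zero, wordProd, strictIncWords]

theorem decSum_zero (α : ℤ) : decSum y n h s α 0 = 1 := by
  simp [decSum, natComps_zero_zero, wordProd, antitoneWords]

theorem compSum_zero (α : ℤ) : compSum y n h s α 0 = 1 := by
  simp [compSum, natComps_zero_zero]

theorem sum_mul_sum_eq_sum_upDownWords (α : ℤ) (k t r : ℕ) :
    ∑ j ∈ range (k + 1),
      (∑ J ∈ natComps j t, ∑ u ∈ strictIncWords s t, wordProd y n h s α J u) *
        ∑ L ∈ natComps (k - j) r,
          ∑ v ∈ antitoneWords s r, wordProd y n h s (α + j * n) L v =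
      ∑ K ∈ natComps k (t + r),
        ∑ lam ∈ upDownWords s (t + r) t, wordProd y n h s α K lam := by
  rw [sum_natComps_add]
  refine sum_congr rfl fun j _ => ?_
  rw [sum_mul]
  refine sum_congr rfl fun J hJ => ?_
  have hJsum : ∑ i, (J i : ℤ) = j := by exact_mod_cast (mem_natComps.mp hJ).2
  simp only [sum_mul, mul_sum, sum_upDownWords_add, wordProd_append, hJsum]
  refine sum_congr rfl fun _ _ => ?_
  rw [sum_comm]

theorem shiftConv_incSum_decSum :
    shiftConv n (incSum y n h s) (decSum y n h s) = fun _ k => if k = 0 then 1 else 0 := by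
  funext α k
  rcases Nat.eq_zero_or_pos k with rfl | hk
  · simp [shiftConv, incSum_zero, decSum_zero]
  rw [if_neg hk.ne']
  set V : ℕ → ℕ → R := fun q t =>
    ∑ K ∈ natComps k q, ∑ lam ∈ upDownWords s q t, wordProd y n h s α K lam
  have hinc : ∀ j ∈ range (k + 1), incSum y n h s α j = ∑ t ∈ range (k + 1),
      ∑ J ∈ natComps j t, ∑ u ∈ strictIncWords s t, wordProd y n h s α J u := fun j hj =>
    sum_range_eq_of_natComps_eq_empty (mem_range.mp hj) _ fun t ht => by simp [ht]
  have hdec : ∀ j ∈ range (k + 1), decSum y n h s (α + j * n) (k - j) =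
      ∑ r ∈ range (k + 1), (-1) ^ r * ∑ L ∈ natComps (k - j) r, ∑ v ∈ antitoneWords s r,
        wordProd y n h s (α + j * n) L v := fun j _ =>
    sum_range_eq_of_natComps_eq_empty (by omega) _ fun r hr => by simp [hr]
  calc shiftConv n (incSum y n h s) (decSum y n h s) α k
      = ∑ t ∈ range (k + 1), ∑ r ∈ range (k + 1), (-1) ^ r * V (t + r) t := by
        simp only [shiftConv, V, ← sum_mul_sum_eq_sum_upDownWords]
        rw [sum_congr rfl fun j hj => by rw [hinc j hj, hdec j hj, sum_mul_sum], sum_comm]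
        refine sum_congr rfl fun t _ => ?_
        rw [sum_comm]
        refine sum_congr rfl fun r _ => ?_
        rw [mul_sum]
        exact sum_congr rfl fun j _ => by ring
    _ = ∑ q ∈ range (k + 1), ∑ t ∈ range (q + 1), (-1) ^ (q - t) * V q t := by
        rw [sum_range_sum_range_eq_sum_range_sum_range_sub]
        · refine sum_congr rfl fun q _ => sum_congr rfl fun t ht => ?_
          rw [Nat.add_sub_cancel' (Nat.lt_succ_iff.mp (mem_range.mp ht))]
        · intro t r htr
          simp [V, natComps_eq_empty_of_lt htr]
    _ = 0 := by
        refine sum_eq_zero fun q _ => ?_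
        rcases Nat.eq_zero_or_pos q with rfl | hq
        · simp [V, natComps_zero_right hk.ne']
        · simp only [V, mul_sum (natComps k q)]
          rw [sum_comm]
          exact sum_eq_zero fun K _ => sum_range_neg_one_pow_mul_sum_upDownWords hq.ne' _

theorem compSum_eq_neg_sum {k : ℕ} (hk : k ≠ 0) (α : ℤ) :
    compSum y n h s α k = -∑ j ∈ range k,
      incSum y n h s α (j + 1) * compSum y n h s (α + ↑(j + 1) * n) (k - (j + 1)) := by
  have hprod : ∀ (j : ℕ) {p : ℕ} (L : Fin p → ℕ),
      ∏ i, incSum y n h s (α + natPrefSum (Fin.append (fun _ : Fin 1 => j + 1) L) i * n)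
          (Fin.append (fun _ : Fin 1 => j + 1) L i) =
        incSum y n h s α (j + 1) *
          ∏ i, incSum y n h s (α + ↑(j + 1) * n + natPrefSum L i * n) (L i) := by
    intro j p L
    simp only [Fin.prod_univ_add, Fin.prod_univ_one, Fin.append_left, Fin.append_right,
      natPrefSum_append_castAdd, natPrefSum_append_natAdd]
    simp [natPrefSum, add_mul, add_assoc]
  have hterm : ∀ p, (-1) ^ (p + 1) * ∑ K ∈ natComps k (p + 1),
      ∏ i, incSum y n h s (α + natPrefSum K i * n) (K i) =
      -∑ j ∈ range k, incSum y n h s α (j + 1) *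
        ((-1) ^ p * ∑ L ∈ natComps (k - (j + 1)) p,
          ∏ i, incSum y n h s (α + ↑(j + 1) * n + natPrefSum L i * n) (L i)) := by
    intro p
    rw [Nat.add_comm p 1, sum_natComps_one_add]
    simp only [hprod, mul_sum, ← sum_neg_distrib]
    exact sum_congr rfl fun j _ => sum_congr rfl fun L _ => by ring
  have hext : ∀ j ∈ range k, compSum y n h s (α + ↑(j + 1) * n) (k - (j + 1)) =
      ∑ p ∈ range k, (-1) ^ p * ∑ L ∈ natComps (k - (j + 1)) p,
        ∏ i, incSum y n h s (α + ↑(j + 1) * n + natPrefSum L i * n) (L i) := fun j hj =>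
    sum_range_eq_of_natComps_eq_empty (by simp at hj; omega) _ fun p hp => by simp [hp]
  rw [compSum, sum_range_succ', natComps_zero_right hk, sum_empty, mul_zero, add_zero,
    sum_congr rfl fun p _ => hterm p, sum_neg_distrib, sum_comm]
  exact congrArg _ (sum_congr rfl fun j hj => by rw [hext j hj, mul_sum])

theorem shiftConv_incSum_compSum :
    shiftConv n (incSum y n h s) (compSum y n h s) = fun _ k => if k = 0 then 1 else 0 := by
  funext α k
  rcases eq_or_ne k 0 with rfl | hk
  · simp [shiftConv, incSum_zero, compSum_zero]
  rw [if_neg hk, shiftConv, sum_range_succ', incSum_zero, Nat.cast_zero, zero_mul, add_zero,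
    Nat.sub_zero, one_mul, compSum_eq_neg_sum y n h s hk, add_neg_cancel]

theorem compSum_eq_decSum : compSum y n h s = decSum y n h s :=
  shiftConv_left_cancel (incSum_zero y n h s)
    ((shiftConv_incSum_compSum y n h s).trans (shiftConv_incSum_decSum y n h s).symm)

theorem Tpoly_shiftVar_eq_incSum (α : ℤ) {k : ℕ} (hk : k ≠ 0) :
    Tpoly (shiftVar y α) n h k s = incSum y n h s α k := by
  rw [incSum, sum_range_succ_eq_sum_Icc_of_apply_zero _ (by simp [natComps_zero_right hk])]
  exact sum_congr rfl fun p _ => sum_comps_eq_sum_natComps k p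
    (fun K => ∑ lam ∈ strictIncWords s p, wordProd y n h s α K lam)

theorem wordProd_comp_rev (α : ℤ) {q : ℕ} (K : Fin q → ℕ) (lam : Fin q → Fin s) :
    wordProd y n h s α (K ∘ Fin.rev) (lam ∘ Fin.rev) =
      ∏ i, y (K i) (((lam i : ℕ) : ℤ) * h + (∑ j ∈ Ioi i, (K j : ℤ)) * n + α) :=
  Fintype.prod_equiv Fin.revPerm _ _ fun i => by
    simp [← natPrefSum_comp_rev]

theorem Spoly_eq_decSum {k : ℕ} (hk : k ≠ 0) :
    Spoly y n h k s = (-1) ^ k * decSum y n h s 0 k := by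
  rw [Spoly, decSum, sum_range_succ_eq_sum_Icc_of_apply_zero _ (by simp [natComps_zero_right hk])]
  refine congrArg _ (sum_congr rfl fun p _ => congrArg _ ?_)
  rw [← sum_natComps_comp_rev]
  simp only [sum_antitoneWords_eq_sum_monotoneWords, wordProd_comp_rev, add_zero]
  exact sum_comps_eq_sum_natComps k p (fun K => ∑ lam ∈ monotoneWords s p,
    ∏ i, y (K i) (((lam i : ℕ) : ℤ) * h + (∑ j ∈ Ioi i, (K j : ℤ)) * n))

theorem sum_comps_prod_Tpoly_eq_compSum {k : ℕ} (hk : k ≠ 0) :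
    ∑ p ∈ Icc 1 k, (-1) ^ p * ∑ K ∈ comps k p,
        ∏ i, Tpoly (shiftVar y (prefSum K i * n)) n h (K i : ℕ) s =
      compSum y n h s 0 k := by
  rw [compSum, sum_range_succ_eq_sum_Icc_of_apply_zero _ (by simp [natComps_zero_right hk])]
  refine sum_congr rfl fun p _ => congrArg _ ?_
  simp only [zero_add]
  rw [← sum_comps_eq_sum_natComps]
  refine sum_congr rfl fun K hK => prod_congr rfl fun i _ => ?_
  exact Tpoly_shiftVar_eq_incSum y n h s _ (Nat.one_le_iff_ne_zero.mp ((mem_filter.mp hK).2.1 i))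

end Sums

end WordSums

theorem Spoly_eq_comp_sum_Tpoly_general {R : Type*} [CommRing R] (y : ℕ → ℤ → R) (n h : ℤ)
    (k s : ℕ) (hk : 1 ≤ k) :
    Spoly y n h k s =
      (-1) ^ k * ∑ p ∈ Finset.Icc 1 k, (-1) ^ p *
        ∑ K ∈ comps k p,
          ∏ i, Tpoly (shiftVar y (prefSum K i * n)) n h ((K i : ℕ)) s := by
  have hk0 : k ≠ 0 := Nat.one_le_iff_ne_zero.mp hk
  rw [WordSums.Spoly_eq_decSum y n h s hk0,
    WordSums.sum_comps_prod_Tpoly_eq_compSum y n h s hk0, WordSums.compSum_eq_decSum]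

/-- `S^k_s = (-1)^k Σ_K (-1)^p T^{k_1}_s T^{k_2, k_1 n}_s ⋯ T^{k_p, (k_1+⋯+k_{p-1})n}_s`. -/
theorem Spoly_eq_comp_sum_Tpoly {R : Type*} [CommRing R] (y : ℕ → ℤ → R) (n h : ℤ)
    (hn : 1 ≤ n) (hh : 1 ≤ h) (k s : ℕ) (hk : 1 ≤ k) (hs : 1 ≤ s) :
    Spoly y n h k s =
      (-1) ^ k * ∑ p ∈ Finset.Icc 1 k, (-1) ^ p *
        ∑ K ∈ comps k p,
          ∏ i, Tpoly (shiftVar y (prefSum K i * n)) n h ((K i : ℕ)) s :=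
  Spoly_eq_comp_sum_Tpoly_general y n h k s hk
end

section
/- The discrete polynomials T^k_s satisfy the composition identity T^k_{s_1+s_2}(i) = T^k_{s_1}(i + s_2 h) + Σ_{j=1}^{k-1} T^j_{s_2}(i) · T^{k-j}_{s_1}(i + s_2 h + j n) + T^k_{s_2}(i) for all k ≥ 1 and s_1, s_2 ≥ 1. -/
open Finset

/-- The discrete polynomial `T^k_s(i)` built from fields `f r : ℤ → R`. -/
def Td {R : Type*} [CommRing R] (f : ℕ → ℤ → R) (n h : ℤ) (k s : ℕ) (i : ℤ) : R :=
  Tpoly (fun r j => f r (i + j)) n h k s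

/-!
A term of `T^k_s`, a composition `(k_1,…,k_p)` of `k` placed at positions
`λ_1 < ⋯ < λ_p` in `{0,…,s-1}`, is the same datum as a weak composition `g` of `k` into `s`
parts, namely `g(λ_a) = k_a` and `g = 0` elsewhere. The shift `(k_1+⋯+k_{a-1})n` becomes the
sum of `g` over the positions before `λ_a`, so for `k ≥ 1` the polynomial `T^k_s` is a sum
over all weak compositions of a weight that is a product over positions. Cutting the
`s₂ + s₁` positions into the first `s₂` and the last `s₁` factors this weight, the second
factor being shifted by `s₂h + jn` where `j` is the mass on the first block. The terms
`j = 0` and `j = k` of the resulting convolution are the two outer terms of the identity.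
-/

open Function

theorem Function.Injective.sum_extend_zero {ι κ M : Type*} [Fintype ι] [DecidableEq κ]
    [AddCommMonoid M] {e : ι → κ} (he : Injective e) (f : ι → M) (t : Finset κ) :
    ∑ l ∈ t, extend e f 0 l = ∑ j ∈ univ.filter (e · ∈ t), f j := by
  calc ∑ l ∈ t, extend e f 0 l
      = ∑ l ∈ (univ.filter (e · ∈ t)).image e, extend e f 0 l := by
        refine (sum_subset (fun l hl => ?_) fun l _ hl => ?_).symm
        · obtain ⟨j, hj, rfl⟩ := mem_image.mp hl
          exact (mem_filter.mp hj).2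
        · refine extend_apply' _ _ _ fun ⟨j, hj⟩ => hl ?_
          subst hj
          exact mem_image_of_mem e (by simpa)
    _ = ∑ j ∈ univ.filter (e · ∈ t), f j := by
        rw [sum_image fun a _ b _ h => he h]
        simp only [he.extend_apply]

theorem Function.Injective.filter_extend_ne_zero {ι κ M : Type*} [Fintype ι] [Fintype κ]
    [DecidableEq κ] [Zero M] [DecidableEq M] {e : ι → κ} (he : Injective e) {f : ι → M} (hf : ∀ i, f i ≠ 0) :
    ({l | extend e f 0 l ≠ 0} : Finset κ) = univ.image e := by
  ext l
  simp only [mem_filter, mem_univ, true_and, mem_image]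
  by_cases hl : ∃ i, e i = l
  · obtain ⟨i, rfl⟩ := hl
    simp [he.extend_apply, hf i]
  · simp [hl]

theorem StrictMono.sum_Iio_extend_zero {p s : ℕ} {M : Type*} [AddCommMonoid M]
    {lam : Fin p → Fin s} (hlam : StrictMono lam) (f : Fin p → M) (i : Fin p) :
    ∑ l ∈ Iio (lam i), extend lam f 0 l = ∑ j ∈ Iio i, f j := by
  rw [hlam.injective.sum_extend_zero]
  congr 1
  ext j
  simp [hlam.lt_iff_lt]

theorem Fin.sum_Iio_natAdd {m n : ℕ} {M : Type*} [AddCommMonoid M] (f : Fin (m + n) → M)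
    (a : Fin n) :
    ∑ i < natAdd m a, f i = ∑ i, f (castAdd n i) + ∑ i < a, f (natAdd m i) := by
  simp only [← filter_gt_eq_Iio, sum_filter, Fin.sum_univ_add, Fin.natAdd_lt_natAdd_iff]
  congr 1
  exact sum_congr rfl fun i _ => if_pos (by simp [Fin.lt_def]; omega)

theorem Finset.Nat.sum_antidiagonalTuple_add {M : Type*} [AddCommMonoid M] (a b k : ℕ)
    (F : (Fin (a + b) → ℕ) → M) :
    ∑ g ∈ antidiagonalTuple (a + b) k, F g =
      ∑ ij ∈ antidiagonal k, ∑ g₁ ∈ antidiagonalTuple a ij.1, ∑ g₂ ∈ antidiagonalTuple b ij.2,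
        F (Fin.append g₁ g₂) := by
  simp_rw [← sum_product', sum_sigma']
  refine sum_nbij' (fun g => ⟨(∑ i, g (Fin.castAdd b i), ∑ i, g (Fin.natAdd a i)),
      (fun i => g (Fin.castAdd b i), fun i => g (Fin.natAdd a i))⟩)
    (fun x => Fin.append x.2.1 x.2.2) ?_ ?_ ?_ ?_ ?_
  · intro g hg
    simp_all [mem_antidiagonalTuple, Fin.sum_univ_add]
  · rintro ⟨⟨i, j⟩, g₁, g₂⟩ hx
    simp_all [mem_antidiagonalTuple, Fin.sum_univ_add]
  · intro g _
    exact Fin.append_castAdd_natAdd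
  · rintro ⟨⟨i, j⟩, g₁, g₂⟩ hx
    simp_all [mem_antidiagonalTuple]
  · intro g _
    simp [Fin.append_castAdd_natAdd]

theorem shiftVar_add_left {M : Type*} (f : ℕ → ℤ → M) (i α : ℤ) :
    shiftVar (fun r j => f r (i + j)) α = fun r j => f r (i + α + j) := by
  funext r j
  simp only [shiftVar]
  rw [add_comm j, add_assoc]

section Placement

variable {p s k : ℕ}

noncomputable def place (lam : Fin p → Fin s) (K : Fin p → Fin (k + 1)) : Fin s → ℕ :=
  extend lam (fun i => (K i : ℕ)) 0

theorem place_apply {lam : Fin p → Fin s} (hlam : Injective lam) (K : Fin p → Fin (k + 1))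
    (i : Fin p) : place lam K (lam i) = K i :=
  hlam.extend_apply _ _ i

theorem card_filter_place_ne_zero {K : Fin p → Fin (k + 1)} (hK : ∀ i, 1 ≤ (K i : ℕ))
    {lam : Fin p → Fin s} (hlam : Injective lam) : #{l | place lam K l ≠ 0} = p := by
  rw [place, hlam.filter_extend_ne_zero fun i => Nat.one_le_iff_ne_zero.mp (hK i),
    card_image_of_injective _ hlam, card_univ, Fintype.card_fin]

theorem place_mem_antidiagonalTuple {K : Fin p → Fin (k + 1)} (hK : ∑ i, (K i : ℕ) = k)
    {lam : Fin p → Fin s} (hlam : Injective lam) :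
    place lam K ∈ Finset.Nat.antidiagonalTuple s k := by
  rw [Finset.Nat.mem_antidiagonalTuple, place, hlam.sum_extend_zero]
  simpa using hK

theorem eq_of_place_eq {K K' : Fin p → Fin (k + 1)} (hK : ∀ i, 1 ≤ (K i : ℕ))
    (hK' : ∀ i, 1 ≤ (K' i : ℕ)) {lam lam' : Fin p → Fin s} (hlam : StrictMono lam)
    (hlam' : StrictMono lam') (heq : place lam K = place lam' K') : K = K' ∧ lam = lam' := by
  have hcard := card_filter_place_ne_zero hK hlam.injective
  have hmem : ∀ i, place lam K (lam i) ≠ 0 := fun i => by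
    rw [place_apply hlam.injective]
    exact Nat.one_le_iff_ne_zero.mp (hK i)
  have hmem' : ∀ i, place lam K (lam' i) ≠ 0 := fun i => by
    rw [heq, place_apply hlam'.injective]
    exact Nat.one_le_iff_ne_zero.mp (hK' i)
  obtain rfl : lam = lam' := by
    rw [orderEmbOfFin_unique hcard (fun i => by simpa using hmem i) hlam,
      orderEmbOfFin_unique hcard (fun i => by simpa using hmem' i) hlam']
  refine ⟨funext fun i => Fin.ext ?_, rfl⟩
  rw [← place_apply hlam.injective, heq, place_apply hlam.injective]

theorem exists_place_eq {g : Fin s → ℕ} (hg : g ∈ Finset.Nat.antidiagonalTuple s k)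
    (hcard : #{l | g l ≠ 0} = p) :
    ∃ K ∈ comps k p, ∃ lam : Fin p → Fin s, StrictMono lam ∧ place lam K = g := by
  set S : Finset (Fin s) := {l | g l ≠ 0}
  set lam := S.orderEmbOfFin hcard
  rw [Finset.Nat.mem_antidiagonalTuple] at hg
  have hle : ∀ l, g l ≤ k := fun l => hg ▸ single_le_sum (fun _ _ => Nat.zero_le _) (mem_univ l)
  refine ⟨fun i => ⟨g (lam i), Nat.lt_succ_of_le (hle _)⟩, ?_, lam, lam.strictMono, ?_⟩
  · simp only [comps, mem_filter, mem_univ, true_and]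
    refine ⟨fun i => Nat.one_le_iff_ne_zero.mpr (mem_filter.mp (S.orderEmbOfFin_mem hcard i)).2, ?_⟩
    calc ∑ i, g (lam i) = ∑ l ∈ univ.image lam, g l :=
          (sum_image fun a _ b _ hab => lam.injective hab).symm
      _ = ∑ l ∈ S, g l := by rw [S.image_orderEmbOfFin_univ]
      _ = k := by rw [sum_filter_ne_zero, hg]
  · funext l
    by_cases hl : ∃ i, lam i = l
    · obtain ⟨i, rfl⟩ := hl
      exact place_apply lam.injective _ i
    · rw [place, extend_apply' _ _ _ hl, Pi.zero_apply, eq_comm]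
      by_contra hgl
      have hl' : l ∈ Set.range lam := by
        rw [S.range_orderEmbOfFin hcard]
        simpa [S] using hgl
      exact hl hl'

theorem card_filter_ne_zero_mem_Icc {g : Fin s → ℕ} (hg : g ∈ Finset.Nat.antidiagonalTuple s k)
    (hk : 1 ≤ k) : #{l | g l ≠ 0} ∈ Icc 1 k := by
  rw [Finset.Nat.mem_antidiagonalTuple, ← sum_filter_ne_zero] at hg
  rw [mem_Icc, Nat.one_le_iff_ne_zero, Ne, card_eq_zero]
  refine ⟨fun h0 => by simp [h0] at hg; omega, ?_⟩
  calc #{l | g l ≠ 0} = ∑ l ∈ {l | g l ≠ 0}, 1 := card_eq_sum_ones _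
    _ ≤ ∑ l ∈ {l | g l ≠ 0}, g l :=
        sum_le_sum fun l hl => Nat.one_le_iff_ne_zero.mpr (mem_filter.mp hl).2
    _ = k := hg

end Placement

section Weak

variable {R : Type*} [CommRing R]

def Tweight {s : ℕ} (y : ℕ → ℤ → R) (n h : ℤ) (g : Fin s → ℕ) : R :=
  ∏ l : Fin s, if g l = 0 then 1 else y (g l) ((l : ℕ) * h + (∑ m < l, (g m : ℤ)) * n)

/-- Unlike `Tpoly y n h 0 s = 0`, this is `1` for `k = 0`, which makes `TpolyWeak_add` a
plain convolution. -/
def TpolyWeak (y : ℕ → ℤ → R) (n h : ℤ) (k s : ℕ) : R :=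
  ∑ g ∈ Finset.Nat.antidiagonalTuple s k, Tweight y n h g

theorem TpolyWeak_zero (y : ℕ → ℤ → R) (n h : ℤ) (s : ℕ) : TpolyWeak y n h 0 s = 1 := by
  simp [TpolyWeak, Tweight, Finset.Nat.antidiagonalTuple_zero_right]

theorem Tweight_append (y : ℕ → ℤ → R) (n h : ℤ) {s₂ s₁ : ℕ} (g₁ : Fin s₂ → ℕ)
    (g₂ : Fin s₁ → ℕ) :
    Tweight y n h (Fin.append g₁ g₂) =
      Tweight y n h g₁ * Tweight (shiftVar y (s₂ * h + (∑ i, g₁ i : ℕ) * n)) n h g₂ := by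
  simp only [Tweight, Fin.prod_univ_add, Fin.sum_Iio_castAdd, Fin.sum_Iio_natAdd,
    Fin.append_left, Fin.append_right, Fin.val_castAdd, Fin.val_natAdd, shiftVar]
  congr 2 with l
  split_ifs
  · rfl
  · congr 1
    push_cast
    ring

theorem TpolyWeak_add (y : ℕ → ℤ → R) (n h : ℤ) (k s₂ s₁ : ℕ) :
    TpolyWeak y n h k (s₂ + s₁) = ∑ ij ∈ antidiagonal k,
      TpolyWeak y n h ij.1 s₂ * TpolyWeak (shiftVar y (s₂ * h + ij.1 * n)) n h ij.2 s₁ := by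
  rw [TpolyWeak, Finset.Nat.sum_antidiagonalTuple_add]
  refine sum_congr rfl fun ij _ => ?_
  rw [TpolyWeak, TpolyWeak, sum_mul_sum]
  refine sum_congr rfl fun g₁ hg₁ => sum_congr rfl fun g₂ _ => ?_
  rw [Tweight_append, Finset.Nat.mem_antidiagonalTuple.mp hg₁]

variable {p s k : ℕ}

theorem Tweight_place (y : ℕ → ℤ → R) (n h : ℤ) {K : Fin p → Fin (k + 1)}
    (hK : ∀ i, 1 ≤ (K i : ℕ)) {lam : Fin p → Fin s} (hlam : StrictMono lam) :
    Tweight y n h (place lam K) = ∏ i, y (K i) ((lam i : ℕ) * h + prefSum K i * n) := by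
  have hoff : ∀ l ∉ univ.image lam, place lam K l = 0 := fun l hl =>
    extend_apply' _ _ _ fun ⟨i, hi⟩ => hl (hi ▸ mem_image_of_mem lam (mem_univ i))
  rw [Tweight, ← prod_subset (subset_univ _) fun l _ hl => if_pos (hoff l hl),
    prod_image fun a _ b _ hab => hlam.injective hab]
  refine prod_congr rfl fun i _ => ?_
  have hprefix : ∑ m < lam i, (place lam K m : ℤ) = prefSum K i := by
    rw [prefSum, ← Nat.cast_sum, ← Nat.cast_sum, place, hlam.sum_Iio_extend_zero]
  rw [place_apply hlam.injective, if_neg (Nat.one_le_iff_ne_zero.mp (hK i)), hprefix]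

theorem sum_placements_eq_sum_fiber (y : ℕ → ℤ → R) (n h : ℤ) :
    ∑ K ∈ comps k p,
      ∑ lam ∈ univ.filter (fun lam : Fin p → Fin s => ∀ i j, i < j → lam i < lam j),
        ∏ i, y (K i) ((lam i : ℕ) * h + prefSum K i * n) =
      ∑ g ∈ Finset.Nat.antidiagonalTuple s k with #{l | g l ≠ 0} = p, Tweight y n h g := by
  rw [← sum_product']
  refine sum_bij (fun x _ => place x.2 x.1) ?_ ?_ ?_ ?_
  · rintro ⟨K, lam⟩ hx
    simp only [comps, mem_product, mem_filter, mem_univ, true_and] at hx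
    have hlam : StrictMono lam := fun i j hij => hx.2 i j hij
    exact mem_filter.mpr ⟨place_mem_antidiagonalTuple hx.1.2 hlam.injective,
      card_filter_place_ne_zero hx.1.1 hlam.injective⟩
  · rintro ⟨K, lam⟩ hx ⟨K', lam'⟩ hx' heq
    simp only [comps, mem_product, mem_filter, mem_univ, true_and] at hx hx'
    obtain ⟨rfl, rfl⟩ := eq_of_place_eq hx.1.1 hx'.1.1 hx.2 hx'.2 heq
    rfl
  · intro g hg
    obtain ⟨hg, hcard⟩ := mem_filter.mp hg
    obtain ⟨K, hK, lam, hlam, rfl⟩ := exists_place_eq hg hcard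
    exact ⟨(K, lam), by simpa [hK] using fun i j hij => hlam hij, rfl⟩
  · rintro ⟨K, lam⟩ hx
    simp only [comps, mem_product, mem_filter, mem_univ, true_and] at hx
    exact (Tweight_place y n h hx.1.1 hx.2).symm

theorem Tpoly_eq_TpolyWeak (y : ℕ → ℤ → R) (n h : ℤ) (hk : 1 ≤ k) (s : ℕ) :
    Tpoly y n h k s = TpolyWeak y n h k s := by
  rw [TpolyWeak, ← sum_fiberwise_of_maps_to fun g hg => card_filter_ne_zero_mem_Icc hg hk,
    Tpoly]
  exact sum_congr rfl fun p _ => sum_placements_eq_sum_fiber y n h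

theorem Td_eq_TpolyWeak (f : ℕ → ℤ → R) (n h : ℤ) (hk : 1 ≤ k) (s : ℕ) (i : ℤ) :
    Td f n h k s i = TpolyWeak (fun r j => f r (i + j)) n h k s :=
  Tpoly_eq_TpolyWeak _ n h hk s

end Weak

theorem Td_comp_general {R : Type*} [CommRing R] (f : ℕ → ℤ → R) (n h : ℤ)
    (k s₁ s₂ : ℕ) (hk : 1 ≤ k) (i : ℤ) :
    Td f n h k (s₁ + s₂) i =
      Td f n h k s₁ (i + (s₂ : ℤ) * h) +
        (∑ j ∈ Finset.Ico 1 k,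
          Td f n h j s₂ i * Td f n h (k - j) s₁ (i + (s₂ : ℤ) * h + (j : ℤ) * n)) +
      Td f n h k s₂ i := by
  rw [Td_eq_TpolyWeak f n h hk, add_comm s₁, TpolyWeak_add,
    Finset.Nat.sum_antidiagonal_eq_sum_range_succ_mk, range_eq_Ico,
    sum_eq_sum_Ico_succ_bot k.succ_pos, sum_Ico_succ_top hk]
  simp only [shiftVar_add_left, TpolyWeak_zero, Nat.sub_zero, Nat.sub_self, Nat.cast_zero,
    zero_mul, add_zero, one_mul, mul_one]
  rw [Td_eq_TpolyWeak f n h hk, Td_eq_TpolyWeak f n h hk, ← add_assoc]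
  congr 2
  refine sum_congr rfl fun j hj => ?_
  rw [mem_Ico] at hj
  rw [Td_eq_TpolyWeak f n h hj.1, Td_eq_TpolyWeak f n h (Nat.sub_pos_of_lt hj.2), add_assoc]

/-- the composition identity
`T^k_{s₁+s₂}(i) = T^k_{s₁}(i+s₂h) + Σ_{j=1}^{k-1} T^j_{s₂}(i) T^{k-j}_{s₁}(i+s₂h+jn) + T^k_{s₂}(i)`. -/
theorem Td_comp {R : Type*} [CommRing R] (f : ℕ → ℤ → R) (n h : ℤ)
    (hn : 1 ≤ n) (hh : 1 ≤ h) (k s₁ s₂ : ℕ) (hk : 1 ≤ k) (hs₁ : 1 ≤ s₁) (hs₂ : 1 ≤ s₂) (i : ℤ) :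
    Td f n h k (s₁ + s₂) i =
      Td f n h k s₁ (i + (s₂ : ℤ) * h) +
        (∑ j ∈ Finset.Ico 1 k,
          Td f n h j s₂ i * Td f n h (k - j) s₁ (i + (s₂ : ℤ) * h + (j : ℤ) * n)) +
      Td f n h k s₂ i :=
  Td_comp_general f n h k s₁ s₂ hk i
end

section
/- The polynomials S^k_s satisfy the recurrence in terms of the variables x^r_j: S^k_s = S^k_{s-1} + Σ_{j=1}^{k-1} x^j_{(s-1)h} · S^{k-j, jn}_{s-1} + x^k_{(s-1)h} for all k ≥ 1 and s ≥ 2, where S^k_s = Σ_K Σ_{0 ≤ λ_1 < ... < λ_p ≤ s-1} x^{k_1}_{λ_1 h + (k_2+...+k_p)n} ⋯ x^{k_{p-1}}_{λ_{p-1} h + k_p n} x^{k_p}_{λ_p h} (sum over compositions K of k, strictly increasing λ's). -/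
open Finset

/-- `S^k_s` expressed in the `x`-variables:
`S^k_s = Σ_K Σ_{0 ≤ λ_1 < ⋯ < λ_p ≤ s-1} x^{k_1}_{λ_1 h + (k_2+⋯+k_p)n} ⋯ x^{k_p}_{λ_p h}`
(strictly increasing `λ`'s). -/
def SpolyX {R : Type*} [CommRing R] (x : ℕ → ℤ → R) (n h : ℤ) (k s : ℕ) : R :=
  ∑ p ∈ Finset.Icc 1 k, ∑ K ∈ comps k p,
    ∑ lam ∈ Finset.univ.filter (fun lam : Fin p → Fin s => ∀ i j, i < j → lam i < lam j),
      ∏ i, x ((K i : ℕ)) (((lam i : ℕ) : ℤ) * h + sufSum K i * n)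

/-! Split the strictly increasing `λ` according to whether `λ_p = s - 1`. Those with
`λ_p < s - 1` make up `S^k_{s-1}`. A term with `λ_p = s - 1` and last part `k_p = j` is
`x^j_{(s-1)h}` times a term of `S^{k-j}_{s-1}` whose indices are all shifted by `j n`, since `j`
occurs in every suffix sum `k_{i+1} + ⋯ + k_p` with `i < p`; for `j = k` the remaining
composition is empty and the factor is `1`. -/

theorem Fin.strictMono_snoc {α : Type*} [Preorder α] {n : ℕ} {f : Fin n → α}
    (hf : StrictMono f) {x : α} (hx : ∀ i, f i < x) :
    StrictMono (Fin.snoc (α := fun _ => α) f x) := by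
  intro i j hij
  induction j using Fin.lastCases with
  | last =>
    obtain ⟨i, rfl⟩ := Fin.exists_castSucc_eq.2 (Fin.ne_last_of_lt hij)
    simpa using hx i
  | cast j =>
    obtain ⟨i, rfl⟩ :=
      Fin.exists_castSucc_eq.2 (Fin.ne_last_of_lt (hij.trans (Fin.castSucc_lt_last j)))
    simpa using hf (Fin.castSucc_lt_castSucc_iff.1 hij)

theorem sum_filter_fin_eq_sum_filter_nat {M : Type*} [AddCommMonoid M] {p m : ℕ}
    (P : (Fin p → ℕ) → Prop) [DecidablePred P] (f : (Fin p → ℕ) → M) :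
    ∑ K ∈ univ.filter (fun K : Fin p → Fin m => P fun i => K i), f (fun i => K i)
      = ∑ K ∈ (Fintype.piFinset fun _ => range m).filter P, f K := by
  refine sum_nbij (fun K i => (K i : ℕ)) ?_ ?_ ?_ fun _ _ => rfl
  · intro K hK
    simp only [mem_filter, mem_univ, true_and] at hK
    simp [hK, Fintype.mem_piFinset]
  · intro K _ L _ hKL
    funext i
    exact Fin.ext (congrFun hKL i)
  · intro K hK
    simp only [coe_filter, Fintype.mem_piFinset, mem_range, Set.mem_ofPred_eq] at hK
    exact ⟨fun i => ⟨K i, hK.1 i⟩, by simpa using hK.2, rfl⟩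

/-- `compsNat k p` and `strictSeqsNat s p` are the ℕ-valued images of `comps k p` and of the
strictly increasing `λ : Fin p → Fin s`; with codomain `ℕ`, removing the last part of a
composition of `k` gives a composition of `k - j` of the same type. -/
def compsNat (k p : ℕ) : Finset (Fin p → ℕ) :=
  (Fintype.piFinset fun _ => range (k + 1)).filter fun K => (∀ i, 1 ≤ K i) ∧ ∑ i, K i = k

def strictSeqsNat (s p : ℕ) : Finset (Fin p → ℕ) :=
  (Fintype.piFinset fun _ => range s).filter fun l => ∀ i j, i < j → l i < l j

theorem mem_compsNat {k p : ℕ} {K : Fin p → ℕ} :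
    K ∈ compsNat k p ↔ (∀ i, 1 ≤ K i) ∧ ∑ i, K i = k := by
  simp only [compsNat, mem_filter, Fintype.mem_piFinset, mem_range, and_iff_right_iff_imp]
  rintro ⟨-, rfl⟩ i
  exact Nat.lt_succ_of_le (single_le_sum (fun j _ => Nat.zero_le (K j)) (mem_univ i))

theorem mem_strictSeqsNat {s p : ℕ} {l : Fin p → ℕ} :
    l ∈ strictSeqsNat s p ↔ (∀ i, l i < s) ∧ StrictMono l := by
  simp [strictSeqsNat, StrictMono]

theorem le_of_mem_compsNat {k p : ℕ} {K : Fin p → ℕ} (hK : K ∈ compsNat k p) : p ≤ k := by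
  obtain ⟨hpos, rfl⟩ := mem_compsNat.1 hK
  simpa using sum_le_sum fun i (_ : i ∈ univ) => hpos i

theorem compsNat_eq_empty {k p : ℕ} (h : k < p) : compsNat k p = ∅ :=
  eq_empty_of_forall_notMem fun _ hK => (le_of_mem_compsNat hK).not_gt h

theorem compsNat_zero_right {k : ℕ} (hk : k ≠ 0) : compsNat k 0 = ∅ :=
  eq_empty_of_forall_notMem fun _ hK => hk (by simpa using (mem_compsNat.1 hK).2.symm)

theorem sum_compsNat_succ {M : Type*} [AddCommMonoid M] (k q : ℕ)
    (f : (Fin (q + 1) → ℕ) → M) :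
    ∑ K ∈ compsNat k (q + 1), f K
      = ∑ j ∈ Icc 1 k, ∑ K ∈ compsNat (k - j) q, f (Fin.snoc K j) := by
  rw [sum_sigma']
  refine sum_nbij' (fun K => ⟨K (Fin.last q), Fin.init K⟩) (fun jK => Fin.snoc jK.2 jK.1)
    ?_ ?_ ?_ ?_ ?_
  · intro K hK
    obtain ⟨hpos, hsum⟩ := mem_compsNat.1 hK
    rw [Fin.sum_univ_castSucc] at hsum
    simp only [mem_sigma, mem_Icc, mem_compsNat]
    exact ⟨⟨hpos _, by omega⟩, fun i => hpos _, by simp only [Fin.init]; omega⟩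
  · rintro ⟨j, K⟩ hjK
    simp only [mem_sigma, mem_Icc, mem_compsNat] at hjK
    obtain ⟨⟨hj, hjk⟩, hpos, hsum⟩ := hjK
    refine mem_compsNat.2
      ⟨Fin.lastCases (by simpa using hj) (fun i => by simpa using hpos i), ?_⟩
    simp only [Fin.sum_univ_castSucc, Fin.snoc_castSucc, Fin.snoc_last]
    omega
  · intro K _
    exact Fin.snoc_init_self K
  · rintro ⟨j, K⟩ _
    simp
  · intro K _
    rw [Fin.snoc_init_self]

theorem sum_strictSeqsNat_succ {M : Type*} [AddCommMonoid M] (t q : ℕ)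
    (g : (Fin (q + 1) → ℕ) → M) :
    ∑ l ∈ strictSeqsNat (t + 1) (q + 1), g l
      = ∑ l ∈ strictSeqsNat t (q + 1), g l + ∑ l ∈ strictSeqsNat t q, g (Fin.snoc l t) := by
  have le_last : ∀ l ∈ strictSeqsNat (t + 1) (q + 1), ∀ i, l i ≤ l (Fin.last q) :=
    fun l hl i => (mem_strictSeqsNat.1 hl).2.monotone (Fin.le_last i)
  rw [← sum_filter_add_sum_filter_not _ (fun l => l (Fin.last q) < t)]
  congr 1
  · refine sum_congr (ext fun l => ?_) fun _ _ => rfl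
    simp only [mem_filter, mem_strictSeqsNat]
    constructor
    · rintro ⟨⟨hlt, hmono⟩, hlast⟩
      exact ⟨fun i => (le_last l (mem_strictSeqsNat.2 ⟨hlt, hmono⟩) i).trans_lt hlast, hmono⟩
    · rintro ⟨hlt, hmono⟩
      exact ⟨⟨fun i => (hlt i).trans (Nat.lt_succ_self t), hmono⟩, hlt _⟩
  · have last_eq : ∀ l ∈ (strictSeqsNat (t + 1) (q + 1)).filter (¬ · (Fin.last q) < t),
        l (Fin.last q) = t := by
      intro l hl
      rw [mem_filter, mem_strictSeqsNat] at hl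
      have := hl.1.1 (Fin.last q)
      omega
    refine sum_nbij' Fin.init (fun l => Fin.snoc l t) ?_ ?_ ?_ ?_ ?_
    · intro l hl
      have hlast := last_eq l hl
      have hmono := (mem_strictSeqsNat.1 (mem_filter.1 hl).1).2
      refine mem_strictSeqsNat.2 ⟨fun i => ?_, hmono.comp (Fin.strictMono_castSucc)⟩
      exact hlast ▸ hmono (Fin.castSucc_lt_last i)
    · intro l hl
      obtain ⟨hlt, hmono⟩ := mem_strictSeqsNat.1 hl
      refine mem_filter.2
        ⟨mem_strictSeqsNat.2 ⟨fun i => ?_, Fin.strictMono_snoc hmono hlt⟩, by simp⟩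
      induction i using Fin.lastCases with
      | last => simp
      | cast i => simpa using (hlt i).trans (Nat.lt_succ_self t)
    · intro l hl
      rw [← last_eq l hl, Fin.snoc_init_self]
    · intro l _
      exact Fin.init_snoc (α := fun _ => ℕ) t l
    · intro l hl
      rw [← last_eq l hl, Fin.snoc_init_self]

section Polynomials

variable {R : Type*} [CommRing R]

def sufSumNat {p : ℕ} (K : Fin p → ℕ) (i : Fin p) : ℤ :=
  ∑ j ∈ Ioi i, (K j : ℤ)

def xMonomial (x : ℕ → ℤ → R) (n h : ℤ) {p : ℕ} (K l : Fin p → ℕ) : R :=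
  ∏ i, x (K i) (l i * h + sufSumNat K i * n)

/-- `SpolyX` plus the contribution `1` of the empty composition, which is nonzero only for
`k = 0`. -/
def SpolyXNat (x : ℕ → ℤ → R) (n h : ℤ) (k s : ℕ) : R :=
  ∑ p ∈ range (k + 1), ∑ K ∈ compsNat k p, ∑ l ∈ strictSeqsNat s p, xMonomial x n h K l

theorem sufSumNat_snoc_castSucc {q : ℕ} (K : Fin q → ℕ) (j : ℕ) (i : Fin q) :
    sufSumNat (Fin.snoc K j) i.castSucc = sufSumNat K i + j := by
  simp only [sufSumNat, ← filter_lt_eq_Ioi, sum_filter, Fin.sum_univ_castSucc, Fin.snoc_castSucc,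
    Fin.snoc_last, Fin.castSucc_lt_castSucc_iff, Fin.castSucc_lt_last, if_true]

theorem sufSumNat_last {q : ℕ} (K : Fin (q + 1) → ℕ) : sufSumNat K (Fin.last q) = 0 := by
  simp [sufSumNat, Ioi_eq_empty.2 fun _ _ => Fin.le_last _]

theorem xMonomial_snoc (x : ℕ → ℤ → R) (n h : ℤ) {q : ℕ} (K l : Fin q → ℕ) (j t : ℕ) :
    xMonomial x n h (Fin.snoc K j) (Fin.snoc l t)
      = x j (t * h) * xMonomial (shiftVar x (j * n)) n h K l := by
  simp only [xMonomial, shiftVar, Fin.prod_univ_castSucc, Fin.snoc_castSucc, Fin.snoc_last,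
    sufSumNat_snoc_castSucc, sufSumNat_last, zero_mul, add_zero, mul_comm (x j _)]
  congr 1
  refine prod_congr rfl fun i _ => ?_
  ring_nf

theorem SpolyXNat_zero (x : ℕ → ℤ → R) (n h : ℤ) (s : ℕ) : SpolyXNat x n h 0 s = 1 := by
  simp [SpolyXNat, compsNat, strictSeqsNat, xMonomial]

theorem sum_range_eq_SpolyXNat (x : ℕ → ℤ → R) (n h : ℤ) {k N : ℕ} (hN : k < N) (s : ℕ) :
    ∑ p ∈ range N, ∑ K ∈ compsNat k p, ∑ l ∈ strictSeqsNat s p, xMonomial x n h K l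
      = SpolyXNat x n h k s := by
  refine (sum_subset (range_subset_range.2 hN) fun p _ hp => ?_).symm
  rw [compsNat_eq_empty (by simpa using hp), sum_empty]

theorem SpolyXNat_eq_sum_range_succ (x : ℕ → ℤ → R) (n h : ℤ) {k : ℕ} (hk : k ≠ 0) (s : ℕ) :
    SpolyXNat x n h k s
      = ∑ q ∈ range k, ∑ K ∈ compsNat k (q + 1), ∑ l ∈ strictSeqsNat s (q + 1),
          xMonomial x n h K l := by
  rw [SpolyXNat, sum_range_succ', compsNat_zero_right hk, sum_empty, add_zero]

theorem SpolyX_eq_SpolyXNat (x : ℕ → ℤ → R) (n h : ℤ) {k : ℕ} (hk : k ≠ 0) (s : ℕ) :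
    SpolyX x n h k s = SpolyXNat x n h k s := by
  rw [SpolyXNat, range_eq_Ico, sum_eq_sum_Ico_succ_bot (Nat.succ_pos k), compsNat_zero_right hk,
    sum_empty, zero_add, Nat.succ_eq_add_one, zero_add, Ico_add_one_right_eq_Icc]
  refine sum_congr rfl fun p _ => ?_
  refine Eq.trans ?_ (sum_filter_fin_eq_sum_filter_nat (m := k + 1) _ _)
  refine sum_congr rfl fun K _ => ?_
  exact sum_filter_fin_eq_sum_filter_nat (m := s) (fun l => ∀ i j, i < j → l i < l j)
    (fun l => xMonomial x n h (fun i => K i) l)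

theorem SpolyXNat_succ (x : ℕ → ℤ → R) (n h : ℤ) {k : ℕ} (hk : k ≠ 0) (t : ℕ) :
    SpolyXNat x n h k (t + 1)
      = SpolyXNat x n h k t
        + ∑ j ∈ Icc 1 k, x j (t * h) * SpolyXNat (shiftVar x (j * n)) n h (k - j) t := by
  simp only [SpolyXNat_eq_sum_range_succ x n h hk, sum_strictSeqsNat_succ, sum_add_distrib]
  congr 1
  calc ∑ q ∈ range k, ∑ K ∈ compsNat k (q + 1), ∑ l ∈ strictSeqsNat t q,
          xMonomial x n h K (Fin.snoc l t)
      = ∑ q ∈ range k, ∑ j ∈ Icc 1 k, ∑ K ∈ compsNat (k - j) q, ∑ l ∈ strictSeqsNat t q,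
          x j (t * h) * xMonomial (shiftVar x (j * n)) n h K l := by
        simp only [sum_compsNat_succ, xMonomial_snoc]
    _ = ∑ j ∈ Icc 1 k, x j (t * h) * ∑ q ∈ range k, ∑ K ∈ compsNat (k - j) q,
          ∑ l ∈ strictSeqsNat t q, xMonomial (shiftVar x (j * n)) n h K l := by
        rw [sum_comm]
        simp only [mul_sum]
    _ = _ := sum_congr rfl fun j hj => by
        rw [sum_range_eq_SpolyXNat _ _ _ (by grind)]

end Polynomials

theorem SpolyX_rec_general {R : Type*} [CommRing R] (x : ℕ → ℤ → R) (n h : ℤ)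
    (k s : ℕ) (hk : 1 ≤ k) (hs : 2 ≤ s) :
    SpolyX x n h k s =
      SpolyX x n h k (s - 1) +
        (∑ j ∈ Finset.Ico 1 k,
          x j (((s : ℤ) - 1) * h) * SpolyX (shiftVar x ((j : ℤ) * n)) n h (k - j) (s - 1)) +
        x k (((s : ℤ) - 1) * h) := by
  obtain ⟨t, rfl⟩ : ∃ t, s = t + 1 := ⟨s - 1, by omega⟩
  have hk₀ : k ≠ 0 := by omega
  rw [Nat.add_sub_cancel, Nat.cast_add_one, add_sub_cancel_right, SpolyX_eq_SpolyXNat x n h hk₀,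
    SpolyX_eq_SpolyXNat x n h hk₀, SpolyXNat_succ x n h hk₀, ← Ico_add_one_right_eq_Icc,
    sum_Ico_succ_top hk, Nat.sub_self, SpolyXNat_zero, mul_one, add_assoc]
  congr 2
  refine sum_congr rfl fun j hj => ?_
  rw [SpolyX_eq_SpolyXNat _ n h (by grind)]

/-- `S^k_s = S^k_{s-1} + Σ_{j=1}^{k-1} x^j_{(s-1)h} S^{k-j, jn}_{s-1} + x^k_{(s-1)h}`. -/
theorem SpolyX_rec {R : Type*} [CommRing R] (x : ℕ → ℤ → R) (n h : ℤ)
    (hn : 1 ≤ n) (hh : 1 ≤ h) (k s : ℕ) (hk : 1 ≤ k) (hs : 2 ≤ s) :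
    SpolyX x n h k s =
      SpolyX x n h k (s - 1) +
        (∑ j ∈ Finset.Ico 1 k,
          x j (((s : ℤ) - 1) * h) * SpolyX (shiftVar x ((j : ℤ) * n)) n h (k - j) (s - 1)) +
        x k (((s : ℤ) - 1) * h) :=
  SpolyX_rec_general x n h k s hk hs
end
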